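/- arXiv:2604.21709 — 7 statements merged into one kernel-verified Lean document; each statement's English description precedes it below -/
import Mathlib

section
/- Let P ≥ Q > 0 be real numbers, let R = [0,P] × [0,Q] ⊂ ℝ², and let s ∈ ℂ with Re(s) > 2. Then s(s−1) · ∫_R min(x, P−x, y, Q−y)^{s−2} dx dy = 8·(Q/2)^s + 2s(P−Q)·(Q/2)^{s−1}, where powers of positive reals are complex powers. -/
/-! By Fubini the integral is an iterated integral over horizontal slices. On the slice at
height `y` the integrand is `min(min(x, P - x), t) ^ (s - 2)` with `t = min(y, Q - y) ≤ Q / 2 ≤ P / 2`.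
Folding `[0, P]` at its midpoint and cutting at `x = t` evaluates the slice integral in closed form
as a combination of powers of `t`; folding `[0, Q]` the same way leaves an integral of powers of `t`
over `[0, Q / 2]`. -/

open MeasureTheory intervalIntegral Set

section

variable {E : Type*} [NormedAddCommGroup E] [NormedSpace ℝ E]

theorem setIntegral_Icc_prod_Icc_eq_intervalIntegral {a b c d : ℝ} (hab : a ≤ b) (hcd : c ≤ d)
    {f : ℝ × ℝ → E} (hf : ContinuousOn f (Icc a b ×ˢ Icc c d)) :
    ∫ p in Icc a b ×ˢ Icc c d, f p = ∫ y in c..d, ∫ x in a..b, f (x, y) := by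
  have hf' : IntegrableOn (fun q : ℝ × ℝ => f q.swap) (Icc c d ×ˢ Icc a b) :=
    (hf.comp continuous_swap.continuousOn fun q hq => ⟨hq.2, hq.1⟩).integrableOn_compact
      (isCompact_Icc.prod isCompact_Icc)
  rw [Measure.volume_eq_prod, ← setIntegral_prod_swap, setIntegral_prod _ hf',
    integral_of_le hcd, ← integral_Icc_eq_integral_Ioc]
  refine setIntegral_congr_fun measurableSet_Icc fun y _ => ?_
  rw [integral_of_le hab, ← integral_Icc_eq_integral_Ioc]
  rfl

theorem integral_comp_min_self_sub {a : ℝ} (ha : 0 ≤ a) {g : ℝ → E}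
    (hg : ContinuousOn g (Icc 0 (a / 2))) :
    ∫ y in 0..a, g (min y (a - y)) = (2 : ℝ) • ∫ y in 0..a / 2, g y := by
  have hcont : ContinuousOn (fun y => g (min y (a - y))) (Icc 0 a) :=
    hg.comp (by fun_prop) fun y hy =>
      ⟨le_min hy.1 (by linarith [hy.2]),
        by linarith [min_le_left y (a - y), min_le_right y (a - y)]⟩
  have left : ∫ y in 0..a / 2, g (min y (a - y)) = ∫ y in 0..a / 2, g y :=
    integral_congr fun y hy => by
      rw [uIcc_of_le (by linarith)] at hy
      simp only [min_eq_left (by linarith [hy.2] : y ≤ a - y)]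
  have right : ∫ y in a / 2..a, g (min y (a - y)) = ∫ y in 0..a / 2, g y := by
    rw [integral_congr (g := fun y => g (a - y)) fun y hy => ?_, integral_comp_sub_left g a]
    · ring_nf
    · rw [uIcc_of_le (by linarith)] at hy
      simp only [min_eq_right (by linarith [hy.1] : a - y ≤ y)]
  rw [← integral_add_adjacent_intervals (b := a / 2)
      ((hcont.mono (Icc_subset_Icc le_rfl (by linarith))).intervalIntegrable_of_Icc (by linarith))
      ((hcont.mono (Icc_subset_Icc (by linarith) le_rfl)).intervalIntegrable_of_Icc (by linarith)),
    left, right, two_smul]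

theorem integral_comp_min_const [CompleteSpace E] {t b : ℝ} (ht : 0 ≤ t) (htb : t ≤ b)
    {g : ℝ → E} (hg : ContinuousOn g (Icc 0 t)) :
    ∫ x in 0..b, g (min x t) = (∫ x in 0..t, g x) + (b - t) • g t := by
  have hcont : ContinuousOn (fun x => g (min x t)) (Icc 0 b) :=
    hg.comp (by fun_prop) fun x hx => ⟨le_min hx.1 ht, min_le_right x t⟩
  rw [← integral_add_adjacent_intervals
      ((hcont.mono (Icc_subset_Icc le_rfl htb)).intervalIntegrable_of_Icc ht)
      ((hcont.mono (Icc_subset_Icc ht le_rfl)).intervalIntegrable_of_Icc htb),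
    ← intervalIntegral.integral_const]
  congr 1 <;> refine integral_congr fun x hx => ?_
  · rw [uIcc_of_le ht] at hx
    simp only [min_eq_left hx.2]
  · rw [uIcc_of_le htb] at hx
    simp only [min_eq_right hx.1]

end

theorem Complex.cpow_add_one_of_ne {w : ℂ} (hw : w + 1 ≠ 0) (x : ℂ) :
    x ^ (w + 1) = x ^ w * x := by
  rcases eq_or_ne x 0 with rfl | hx
  · simp [Complex.zero_cpow hw]
  · rw [Complex.cpow_add _ _ hx, Complex.cpow_one]

theorem integral_zero_ofReal_cpow {w : ℂ} (hw : -1 < w.re) (t : ℝ) :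
    ∫ x in 0..t, (x : ℂ) ^ w = (t : ℂ) ^ (w + 1) / (w + 1) := by
  have hw1 : w + 1 ≠ 0 :=
    Complex.ne_zero_of_re_pos (by rw [Complex.add_re, Complex.one_re]; linarith)
  rw [integral_cpow (Or.inl hw), Complex.ofReal_zero, Complex.zero_cpow hw1, sub_zero]

noncomputable def sliceIntegral (P : ℝ) (w : ℂ) (t : ℝ) : ℂ :=
  2 * (t : ℂ) ^ (w + 1) / (w + 1) + P * (t : ℂ) ^ w - 2 * (t : ℂ) ^ (w + 1)

theorem integral_ofReal_min_min_sub_cpow {P t : ℝ} (ht : 0 ≤ t) (htP : 2 * t ≤ P) {w : ℂ}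
    (hw : 0 < w.re) :
    ∫ x in 0..P, ((min (min x (P - x)) t : ℝ) : ℂ) ^ w = sliceIntegral P w t := by
  have hpow : Continuous fun u : ℝ => (u : ℂ) ^ w := Complex.continuous_ofReal_cpow_const hw
  have hw1 : w + 1 ≠ 0 :=
    Complex.ne_zero_of_re_pos (by rw [Complex.add_re, Complex.one_re]; linarith)
  rw [integral_comp_min_self_sub (g := fun u => ((min u t : ℝ) : ℂ) ^ w) (by linarith)
      (hpow.comp (continuous_id.min continuous_const)).continuousOn,
    integral_comp_min_const (g := fun u : ℝ => (u : ℂ) ^ w) ht (by linarith) hpow.continuousOn,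
    integral_zero_ofReal_cpow (by linarith), sliceIntegral, Complex.cpow_add_one_of_ne hw1]
  simp only [Complex.real_smul]
  push_cast
  ring

theorem continuous_sliceIntegral (P : ℝ) {w : ℂ} (hw : 0 < w.re) :
    Continuous (sliceIntegral P w) := by
  have := Complex.continuous_ofReal_cpow_const hw
  have := Complex.continuous_ofReal_cpow_const
    (show 0 < (w + 1).re by rw [Complex.add_re, Complex.one_re]; linarith)
  unfold sliceIntegral
  fun_prop

theorem integral_sliceIntegral (c P : ℝ) {w : ℂ} (hw : 0 < w.re) :
    ∫ t in 0..c, sliceIntegral P w t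
      = 2 * (c : ℂ) ^ (w + 2) / (w + 1) / (w + 2) + P * (c : ℂ) ^ (w + 1) / (w + 1)
        - 2 * (c : ℂ) ^ (w + 2) / (w + 2) := by
  have hint : ∀ v : ℂ, 0 < v.re → IntervalIntegrable (fun t : ℝ => (t : ℂ) ^ v) volume 0 c :=
    fun v hv => intervalIntegrable_cpow (Or.inl hv.le)
  have hw1 : 0 < (w + 1).re := by rw [Complex.add_re, Complex.one_re]; linarith
  unfold sliceIntegral
  rw [integral_sub (((hint _ hw1).const_mul 2).div_const _ |>.add ((hint w hw).const_mul _))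
      ((hint _ hw1).const_mul 2), integral_add (((hint _ hw1).const_mul 2).div_const _)
      ((hint w hw).const_mul _), intervalIntegral.integral_div,
    intervalIntegral.integral_const_mul, intervalIntegral.integral_const_mul,
    integral_zero_ofReal_cpow (by linarith), integral_zero_ofReal_cpow (by linarith),
    show w + 1 + 1 = w + 2 by ring]
  ring

theorem stmt1 (P Q : ℝ) (hQ : 0 < Q) (hPQ : Q ≤ P) (s : ℂ) (hs : 2 < s.re) :
    s * (s - 1) *
        (∫ p in Set.Icc (0 : ℝ) P ×ˢ Set.Icc (0 : ℝ) Q,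
          ((min (min p.1 (P - p.1)) (min p.2 (Q - p.2)) : ℝ) : ℂ) ^ (s - 2))
      = 8 * ((Q / 2 : ℝ) : ℂ) ^ s + 2 * s * ((P - Q : ℝ) : ℂ) * ((Q / 2 : ℝ) : ℂ) ^ (s - 1) := by
  obtain ⟨w, rfl⟩ : ∃ w, s = w + 2 := ⟨s - 2, by ring⟩
  have hw : 0 < w.re := by
    rw [Complex.add_re, Complex.re_ofNat] at hs
    linarith
  have slice : EqOn (fun y => ∫ x in 0..P, ((min (min x (P - x)) (min y (Q - y)) : ℝ) : ℂ) ^ w)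
      (fun y => sliceIntegral P w (min y (Q - y))) (uIcc 0 Q) := fun y hy => by
    rw [uIcc_of_le hQ.le] at hy
    exact integral_ofReal_min_min_sub_cpow (le_min hy.1 (by linarith [hy.2]))
      (by linarith [min_le_left y (Q - y), min_le_right y (Q - y)]) hw
  have hcont : Continuous fun p : ℝ × ℝ =>
      ((min (min p.1 (P - p.1)) (min p.2 (Q - p.2)) : ℝ) : ℂ) ^ w :=
    (Complex.continuous_ofReal_cpow_const hw).comp (by fun_prop)
  rw [add_sub_cancel_right, setIntegral_Icc_prod_Icc_eq_intervalIntegral (by linarith) hQ.le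
      hcont.continuousOn, integral_congr slice,
    integral_comp_min_self_sub hQ.le (continuous_sliceIntegral P hw).continuousOn,
    integral_sliceIntegral _ _ hw]
  have hw1 : w + 1 ≠ 0 := Complex.ne_zero_of_re_pos (by rw [Complex.add_re, Complex.one_re]; linarith)
  have hw2 : w + 2 ≠ 0 := Complex.ne_zero_of_re_pos (by rw [Complex.add_re, Complex.re_ofNat]; linarith)
  have hc : ((Q / 2 : ℝ) : ℂ) ^ (w + 2) = ((Q / 2 : ℝ) : ℂ) ^ (w + 1) * (Q / 2 : ℝ) := by
    rw [← Complex.cpow_add_one_of_ne (by rwa [add_assoc, one_add_one_eq_two]), add_assoc,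
      one_add_one_eq_two]
  rw [Complex.real_smul, show w + 2 - 1 = w + 1 by ring, hc]
  push_cast
  field_simp
  ring
end

section
/- Let λ > 0 and let s ∈ ℂ with Re(s) > 2. Then ∫_{{x ≥ 0, y ≥ 0, x+y < λ}} min(x,y)^{s−2} dx dy + ∫_{{x ≥ 0, y ≥ 0, x+y ≥ λ}} ( min(x,y)^{s−2} − min(x, y, x+y−λ)^{s−2} ) dx dy = λ^s / (s(s−1)), where both integrals (with respect to two-dimensional Lebesgue measure) converge absolutely and powers of nonnegative reals are complex powers. -/
/-!
On the closed quadrant both integrands vanish outside the square `[0, l]²`, and on the square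
they agree with `min(x, y)^a - max(x + y - l, 0)^a` (`a = s - 2`), which is continuous since
`Re a > 0`. By Fubini, integrating in `y` gives `(l - x) x^a`: the two terms contribute
`x^(a+1)/(a+1) + (l - x) x^a` and `x^(a+1)/(a+1)`. Finally
`∫₀ˡ (l - x) x^a dx = l^(a+2) / ((a + 1)(a + 2))`.
-/

open MeasureTheory Set intervalIntegral

variable {a : ℂ}

lemma Complex.add_one_ne_zero_of_neg_one_lt_re (ha : -1 < a.re) : a + 1 ≠ 0 := fun h => by
  have := congrArg Complex.re h
  simp only [Complex.add_re, Complex.one_re, Complex.zero_re] at this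
  linarith

lemma integral_ofReal_cpow_zero_left (ha : -1 < a.re) (x : ℝ) :
    ∫ y in (0 : ℝ)..x, (y : ℂ) ^ a = (x : ℂ) ^ (a + 1) / (a + 1) := by
  rw [integral_cpow (Or.inl ha), Complex.ofReal_zero,
    Complex.zero_cpow (Complex.add_one_ne_zero_of_neg_one_lt_re ha), sub_zero]

lemma continuous_ofReal_min_cpow (ha : 0 < a.re) (x : ℝ) :
    Continuous fun y : ℝ => ((min x y : ℝ) : ℂ) ^ a :=
  (Complex.continuous_ofReal_cpow_const ha).comp (continuous_const.min continuous_id)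

lemma continuous_ofReal_max_add_sub_cpow (ha : 0 < a.re) (x l : ℝ) :
    Continuous fun y : ℝ => ((max (x + y - l) 0 : ℝ) : ℂ) ^ a :=
  (Complex.continuous_ofReal_cpow_const ha).comp
    (((continuous_const.add continuous_id).sub continuous_const).max continuous_const)

lemma integral_ofReal_min_cpow (ha : 0 < a.re) {x l : ℝ} (hx : 0 ≤ x) (hxl : x ≤ l) :
    ∫ y in (0 : ℝ)..l, ((min x y : ℝ) : ℂ) ^ a
      = (x : ℂ) ^ (a + 1) / (a + 1) + (l - x) * (x : ℂ) ^ a := by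
  have hcont := continuous_ofReal_min_cpow ha x
  rw [← integral_add_adjacent_intervals (hcont.intervalIntegrable 0 x)
    (hcont.intervalIntegrable x l)]
  have below : ∫ y in (0 : ℝ)..x, ((min x y : ℝ) : ℂ) ^ a = ∫ y in (0 : ℝ)..x, (y : ℂ) ^ a :=
    integral_congr fun y hy => by
      rw [uIcc_of_le hx] at hy
      simp only [min_eq_right hy.2]
  have above : ∫ y in x..l, ((min x y : ℝ) : ℂ) ^ a = ∫ _ in x..l, (x : ℂ) ^ a :=
    integral_congr fun y hy => by
      rw [uIcc_of_le hxl] at hy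
      simp only [min_eq_left hy.1]
  rw [below, above, integral_ofReal_cpow_zero_left (by linarith),
    intervalIntegral.integral_const, Complex.real_smul]
  push_cast
  rfl

lemma integral_ofReal_max_add_sub_cpow (ha : 0 < a.re) {x l : ℝ} (hx : 0 ≤ x) (hxl : x ≤ l) :
    ∫ y in (0 : ℝ)..l, ((max (x + y - l) 0 : ℝ) : ℂ) ^ a = (x : ℂ) ^ (a + 1) / (a + 1) := by
  have hcont := continuous_ofReal_max_add_sub_cpow ha x l
  rw [← integral_add_adjacent_intervals (hcont.intervalIntegrable 0 (l - x))
    (hcont.intervalIntegrable (l - x) l)]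
  have below : ∫ y in (0 : ℝ)..(l - x), ((max (x + y - l) 0 : ℝ) : ℂ) ^ a = 0 := by
    refine (integral_congr fun y hy => ?_).trans intervalIntegral.integral_zero
    rw [uIcc_of_le (by linarith)] at hy
    simp only [max_eq_right (by linarith [hy.2] : x + y - l ≤ 0), Complex.ofReal_zero,
      Complex.zero_cpow (Complex.ne_zero_of_re_pos ha)]
  have above : ∫ y in (l - x)..l, ((max (x + y - l) 0 : ℝ) : ℂ) ^ a
      = ∫ y in (l - x)..l, ((y - (l - x) : ℝ) : ℂ) ^ a :=
    integral_congr fun y hy => by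
      rw [uIcc_of_le (by linarith)] at hy
      rw [max_eq_left (by linarith [hy.1])]
      ring_nf
  rw [below, above, integral_comp_sub_right (fun y : ℝ => (y : ℂ) ^ a), sub_self,
    sub_sub_cancel, zero_add, integral_ofReal_cpow_zero_left (by linarith)]

lemma sub_mul_ofReal_cpow (ha : a + 1 ≠ 0) (l x : ℝ) :
    ((l : ℂ) - x) * (x : ℂ) ^ a = l * (x : ℂ) ^ a - (x : ℂ) ^ (a + 1) := by
  rcases eq_or_ne x 0 with rfl | hx
  · simp [Complex.zero_cpow ha]
  · rw [Complex.cpow_add _ _ (Complex.ofReal_ne_zero.2 hx), Complex.cpow_one]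
    ring

lemma integral_sub_mul_ofReal_cpow (ha : -1 < a.re) (l : ℝ) :
    ∫ x in (0 : ℝ)..l, ((l : ℂ) - x) * (x : ℂ) ^ a = (l : ℂ) ^ (a + 2) / ((a + 1) * (a + 2)) := by
  have ha1 := Complex.add_one_ne_zero_of_neg_one_lt_re ha
  have ha' : -1 < (a + 1).re := by
    simp only [Complex.add_re, Complex.one_re]
    linarith
  have ha2 : a + 2 ≠ 0 := by
    simpa [add_assoc, one_add_one_eq_two] using Complex.add_one_ne_zero_of_neg_one_lt_re ha'
  simp_rw [sub_mul_ofReal_cpow ha1]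
  rw [integral_sub ((intervalIntegrable_cpow' ha).const_mul _) (intervalIntegrable_cpow' ha'),
    intervalIntegral.integral_const_mul, integral_ofReal_cpow_zero_left ha,
    integral_ofReal_cpow_zero_left ha', add_assoc, one_add_one_eq_two]
  rcases eq_or_ne l 0 with rfl | hl
  · simp [Complex.zero_cpow ha1, Complex.zero_cpow ha2]
  · have hpow : (l : ℂ) ^ (a + 2) = l * (l : ℂ) ^ (a + 1) := by
      rw [← one_add_one_eq_two, ← add_assoc, Complex.cpow_add _ _ (Complex.ofReal_ne_zero.2 hl),
        Complex.cpow_one, mul_comm]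
    rw [hpow]
    field_simp
    ring

def underAntidiagonal (l : ℝ) : Set (ℝ × ℝ) := {p | 0 ≤ p.1 ∧ 0 ≤ p.2 ∧ p.1 + p.2 < l}

def overAntidiagonal (l : ℝ) : Set (ℝ × ℝ) := {p | 0 ≤ p.1 ∧ 0 ≤ p.2 ∧ l ≤ p.1 + p.2}

lemma measurableSet_underAntidiagonal (l : ℝ) : MeasurableSet (underAntidiagonal l) :=
  (measurableSet_le measurable_const measurable_fst).inter <|
    (measurableSet_le measurable_const measurable_snd).inter <|
      measurableSet_lt (measurable_fst.add measurable_snd) measurable_const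

lemma measurableSet_overAntidiagonal (l : ℝ) : MeasurableSet (overAntidiagonal l) :=
  (measurableSet_le measurable_const measurable_fst).inter <|
    (measurableSet_le measurable_const measurable_snd).inter <|
      measurableSet_le measurable_const (measurable_fst.add measurable_snd)

lemma disjoint_underAntidiagonal_overAntidiagonal (l : ℝ) :
    Disjoint (underAntidiagonal l) (overAntidiagonal l) :=
  disjoint_left.2 fun _ hu ho => (not_le.2 hu.2.2) ho.2.2

lemma underAntidiagonal_subset_square (l : ℝ) :
    underAntidiagonal l ⊆ Icc 0 l ×ˢ Icc 0 l := fun _ ⟨hx, hy, hxy⟩ =>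
  ⟨⟨hx, by linarith⟩, ⟨hy, by linarith⟩⟩

lemma underAntidiagonal_union_overAntidiagonal_inter_square (l : ℝ) :
    underAntidiagonal l ∪ overAntidiagonal l ∩ Icc 0 l ×ˢ Icc 0 l = Icc 0 l ×ˢ Icc 0 l := by
  refine (union_subset (underAntidiagonal_subset_square l) inter_subset_right).antisymm ?_
  intro p hp
  rcases lt_or_ge (p.1 + p.2) l with hxy | hxy
  · exact Or.inl ⟨hp.1.1, hp.2.1, hxy⟩
  · exact Or.inr ⟨⟨hp.1.1, hp.2.1, hxy⟩, hp⟩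

noncomputable def squareIntegrand (l : ℝ) (a : ℂ) (p : ℝ × ℝ) : ℂ :=
  ((min p.1 p.2 : ℝ) : ℂ) ^ a - ((max (p.1 + p.2 - l) 0 : ℝ) : ℂ) ^ a

lemma continuous_squareIntegrand (ha : 0 < a.re) (l : ℝ) : Continuous (squareIntegrand l a) :=
  ((Complex.continuous_ofReal_cpow_const ha).comp (continuous_fst.min continuous_snd)).sub <|
    (Complex.continuous_ofReal_cpow_const ha).comp
      (((continuous_fst.add continuous_snd).sub continuous_const).max continuous_const)

lemma integrableOn_squareIntegrand (ha : 0 < a.re) (l : ℝ) :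
    IntegrableOn (squareIntegrand l a) (Icc 0 l ×ˢ Icc 0 l) :=
  (continuous_squareIntegrand ha l).continuousOn.integrableOn_compact
    (isCompact_Icc.prod isCompact_Icc)

lemma integral_squareIntegrand_slice (ha : 0 < a.re) {x l : ℝ} (hx : 0 ≤ x) (hxl : x ≤ l) :
    ∫ y in (0 : ℝ)..l, squareIntegrand l a (x, y) = ((l : ℂ) - x) * (x : ℂ) ^ a := by
  simp only [squareIntegrand]
  rw [intervalIntegral.integral_sub ((continuous_ofReal_min_cpow ha x).intervalIntegrable 0 l)
      ((continuous_ofReal_max_add_sub_cpow ha x l).intervalIntegrable 0 l),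
    integral_ofReal_min_cpow ha hx hxl, integral_ofReal_max_add_sub_cpow ha hx hxl]
  ring

lemma setIntegral_squareIntegrand (ha : 0 < a.re) {l : ℝ} (hl : 0 ≤ l) :
    ∫ p in Icc 0 l ×ˢ Icc 0 l, squareIntegrand l a p
      = (l : ℂ) ^ (a + 2) / ((a + 1) * (a + 2)) := by
  rw [Measure.volume_eq_prod, setIntegral_prod _ (integrableOn_squareIntegrand ha l)]
  calc ∫ x in Icc 0 l, ∫ y in Icc 0 l, squareIntegrand l a (x, y)
      = ∫ x in Icc 0 l, ((l : ℂ) - x) * (x : ℂ) ^ a :=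
        setIntegral_congr_fun measurableSet_Icc fun x ⟨hx, hxl⟩ => by
          rw [integral_Icc_eq_integral_Ioc, ← integral_of_le hl,
            integral_squareIntegrand_slice ha hx hxl]
    _ = (l : ℂ) ^ (a + 2) / ((a + 1) * (a + 2)) := by
      rw [integral_Icc_eq_integral_Ioc, ← integral_of_le hl,
        integral_sub_mul_ofReal_cpow (by linarith)]

lemma squareIntegrand_of_mem_underAntidiagonal (ha : a ≠ 0) {l : ℝ} {p : ℝ × ℝ}
    (hp : p ∈ underAntidiagonal l) : squareIntegrand l a p = ((min p.1 p.2 : ℝ) : ℂ) ^ a := by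
  rw [squareIntegrand, max_eq_right (by linarith [hp.2.2]), Complex.ofReal_zero,
    Complex.zero_cpow ha, sub_zero]

lemma indicator_squareIntegrand_of_mem_overAntidiagonal {l : ℝ} {p : ℝ × ℝ}
    (hp : p ∈ overAntidiagonal l) :
    (Icc 0 l ×ˢ Icc 0 l).indicator (squareIntegrand l a) p
      = ((min p.1 p.2 : ℝ) : ℂ) ^ a - ((min (min p.1 p.2) (p.1 + p.2 - l) : ℝ) : ℂ) ^ a := by
  obtain ⟨hx, hy, hxy⟩ := hp
  by_cases hK : p ∈ Icc 0 l ×ˢ Icc 0 l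
  · rw [indicator_of_mem hK, squareIntegrand, max_eq_left (by linarith),
      min_eq_right (le_min (by linarith [hK.2.2]) (by linarith [hK.1.2]))]
  · have hlarge : l < p.1 ∨ l < p.2 := by
      contrapose! hK
      exact ⟨⟨hx, hK.1⟩, ⟨hy, hK.2⟩⟩
    have hmin : min p.1 p.2 ≤ p.1 + p.2 - l := by
      rcases hlarge with h | h
      · exact (min_le_right _ _).trans (by linarith)
      · exact (min_le_left _ _).trans (by linarith)
    rw [indicator_of_notMem hK, min_eq_left hmin, sub_self]

lemma integrableOn_underAntidiagonal (ha : 0 < a.re) (l : ℝ) :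
    IntegrableOn (fun p : ℝ × ℝ => ((min p.1 p.2 : ℝ) : ℂ) ^ a) (underAntidiagonal l) :=
  ((integrableOn_squareIntegrand ha l).mono_set (underAntidiagonal_subset_square l)).congr_fun
    (fun _ hp => squareIntegrand_of_mem_underAntidiagonal (Complex.ne_zero_of_re_pos ha) hp)
    (measurableSet_underAntidiagonal l)

lemma integrableOn_overAntidiagonal (ha : 0 < a.re) (l : ℝ) :
    IntegrableOn (fun p : ℝ × ℝ =>
      ((min p.1 p.2 : ℝ) : ℂ) ^ a - ((min (min p.1 p.2) (p.1 + p.2 - l) : ℝ) : ℂ) ^ a)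
      (overAntidiagonal l) :=
  ((integrableOn_squareIntegrand ha l).integrable_indicator
      (measurableSet_Icc.prod measurableSet_Icc)).integrableOn.congr_fun
    (fun _ hp => indicator_squareIntegrand_of_mem_overAntidiagonal hp)
    (measurableSet_overAntidiagonal l)

lemma setIntegral_underAntidiagonal_add_setIntegral_overAntidiagonal (ha : 0 < a.re) (l : ℝ) :
    (∫ p in underAntidiagonal l, ((min p.1 p.2 : ℝ) : ℂ) ^ a) +
      ∫ p in overAntidiagonal l,
        ((min p.1 p.2 : ℝ) : ℂ) ^ a - ((min (min p.1 p.2) (p.1 + p.2 - l) : ℝ) : ℂ) ^ a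
      = ∫ p in Icc 0 l ×ˢ Icc 0 l, squareIntegrand l a p := by
  have hK : MeasurableSet (Icc 0 l ×ˢ Icc 0 l) := measurableSet_Icc.prod measurableSet_Icc
  rw [← setIntegral_congr_fun (measurableSet_underAntidiagonal l)
      fun _ hp => squareIntegrand_of_mem_underAntidiagonal (Complex.ne_zero_of_re_pos ha) hp,
    ← setIntegral_congr_fun (measurableSet_overAntidiagonal l)
      fun _ hp => indicator_squareIntegrand_of_mem_overAntidiagonal hp,
    setIntegral_indicator hK,
    ← setIntegral_union ((disjoint_underAntidiagonal_overAntidiagonal l).mono_right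
        inter_subset_left) ((measurableSet_overAntidiagonal l).inter hK)
      ((integrableOn_squareIntegrand ha l).mono_set (underAntidiagonal_subset_square l))
      ((integrableOn_squareIntegrand ha l).mono_set inter_subset_right),
    underAntidiagonal_union_overAntidiagonal_inter_square]

theorem stmt2 (l : ℝ) (hl : 0 < l) (s : ℂ) (hs : 2 < s.re) :
    IntegrableOn (fun p : ℝ × ℝ => ((min p.1 p.2 : ℝ) : ℂ) ^ (s - 2))
        {p : ℝ × ℝ | 0 ≤ p.1 ∧ 0 ≤ p.2 ∧ p.1 + p.2 < l} volume ∧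
    IntegrableOn (fun p : ℝ × ℝ =>
        ((min p.1 p.2 : ℝ) : ℂ) ^ (s - 2)
          - ((min (min p.1 p.2) (p.1 + p.2 - l) : ℝ) : ℂ) ^ (s - 2))
        {p : ℝ × ℝ | 0 ≤ p.1 ∧ 0 ≤ p.2 ∧ l ≤ p.1 + p.2} volume ∧
    (∫ p in {p : ℝ × ℝ | 0 ≤ p.1 ∧ 0 ≤ p.2 ∧ p.1 + p.2 < l},
        ((min p.1 p.2 : ℝ) : ℂ) ^ (s - 2)) +
      (∫ p in {p : ℝ × ℝ | 0 ≤ p.1 ∧ 0 ≤ p.2 ∧ l ≤ p.1 + p.2},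
        (((min p.1 p.2 : ℝ) : ℂ) ^ (s - 2)
          - ((min (min p.1 p.2) (p.1 + p.2 - l) : ℝ) : ℂ) ^ (s - 2)))
      = (l : ℂ) ^ s / (s * (s - 1)) := by
  have ha : 0 < (s - 2).re := by simpa using hs
  refine ⟨integrableOn_underAntidiagonal ha l, integrableOn_overAntidiagonal ha l, ?_⟩
  refine (setIntegral_underAntidiagonal_add_setIntegral_overAntidiagonal ha l).trans ?_
  rw [setIntegral_squareIntegrand ha hl.le, sub_add_cancel]
  congr 1
  ring
end

section
/- Let s ∈ ℂ with 1/2 < Re(s) < 1. Then the function u ↦ H_s(u) is integrable on (0,1], and ∫_0^1 H_s(u) du = ∫_0^∞ t^{−s}(1+t)^{−s} dt = Γ(1−s)·Γ(2s−1) / Γ(s), where Γ is the complex Gamma function. In particular ∫_0^1 H_{2/3}(u) du = Γ(1/3)² / Γ(2/3). -/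
/-!
Splitting `(0, ∞)` into the intervals `(k, k + 1]` and translating each of them back to `(0, 1]`
shows that `H_s` is the periodization `u ↦ ∑ₖ f (k + u)` of `f t = t^(-s) (1 + t)^(-s)`. Since `f`
is integrable on `(0, ∞)`, Fubini–Tonelli gives `∫₀¹ H_s = ∫₀^∞ f`, and the substitution
`t = x / (1 - x)` turns `∫₀^∞ f` into the Beta integral `B(1 - s, 2s - 1) = Γ(1-s) Γ(2s-1) / Γ(s)`.
-/

open MeasureTheory

/-- The kernel `H_s(u) = ∑_{k ≥ 0} (k+u)^{-s} (k+1+u)^{-s}`. -/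
noncomputable def Hs (s : ℂ) (u : ℝ) : ℂ :=
  ∑' k : ℕ, (((k : ℝ) + u : ℝ) : ℂ) ^ (-s) * (((k : ℝ) + 1 + u : ℝ) : ℂ) ^ (-s)

open Set Complex Function

theorem integrable_tsum_of_summable_integral_norm {α E : Type*} [MeasurableSpace α]
    {μ : Measure α} [NormedAddCommGroup E] [CompleteSpace E] {F : ℕ → α → E}
    (hF_int : ∀ i, Integrable (F i) μ) (hF_sum : Summable fun i ↦ ∫ a, ‖F i a‖ ∂μ) :
    Integrable (fun a ↦ ∑' i, F i a) μ := by
  have h_lintegral : ∫⁻ a, ∑' i, ‖F i a‖ₑ ∂μ < ⊤ := by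
    rw [lintegral_tsum fun i ↦ (hF_int i).1.enorm]
    simp_rw [← ofReal_integral_norm_eq_lintegral_enorm (hF_int _)]
    rw [← ENNReal.ofReal_tsum_of_nonneg (fun i ↦ integral_nonneg fun a ↦ norm_nonneg _) hF_sum]
    exact ENNReal.ofReal_lt_top
  have h_summable : ∀ᵐ a ∂μ, Summable fun i ↦ F i a := by
    filter_upwards [ae_lt_top' (AEMeasurable.tsum fun i ↦ (hF_int i).1.enorm)
      h_lintegral.ne] with a ha
    exact (tsum_enorm_ne_top_iff_summable_norm.1 ha.ne).of_norm
  refine ⟨aestronglyMeasurable_of_tendsto_ae Filter.atTop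
    (fun n ↦ Finset.aestronglyMeasurable_fun_sum _ fun i _ ↦ (hF_int i).1)
    (h_summable.mono fun a ha ↦ ha.hasSum.tendsto_sum_nat), ?_⟩
  exact (lintegral_mono fun a ↦ enorm_tsum_le_tsum_enorm).trans_lt h_lintegral

section Periodization

theorem iUnion_Ioc_natCast : ⋃ k : ℕ, Ioc (k : ℝ) (k + 1) = Ioi 0 := by
  ext x
  simp only [mem_iUnion, mem_Ioi]
  refine ⟨fun ⟨k, hk⟩ ↦ (Nat.cast_nonneg k).trans_lt hk.1, fun hx ↦ ?_⟩
  have hceil : ⌈x⌉₊ ≠ 0 := (Nat.ceil_pos.2 hx).ne'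
  obtain ⟨h_lt, h_le⟩ := (Nat.ceil_eq_iff hceil).1 rfl
  refine ⟨⌈x⌉₊ - 1, h_lt, ?_⟩
  rwa [Nat.cast_sub (Nat.one_le_iff_ne_zero.2 hceil), Nat.cast_one, sub_add_cancel]

theorem pairwise_disjoint_Ioc_natCast :
    Pairwise (Disjoint on fun k : ℕ ↦ Ioc (k : ℝ) (k + 1)) := fun i j hij ↦ by
  simpa using pairwise_disjoint_Ioc_intCast (α := ℝ) (Nat.cast_injective.ne hij)

variable {E : Type*} [NormedAddCommGroup E]

theorem integrableOn_Ioc_comp_add_left_iff (f : ℝ → E) (c : ℝ) :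
    IntegrableOn (fun u ↦ f (c + u)) (Ioc 0 1) ↔ IntegrableOn f (Ioc c (c + 1)) := by
  have := (measurePreserving_add_left volume c).integrableOn_comp_preimage
    (measurableEmbedding_addLeft c) (f := f) (s := Ioc c (c + 1))
  rwa [preimage_const_add_Ioc, sub_self, add_sub_cancel_left] at this

theorem setIntegral_Ioc_comp_add_left [NormedSpace ℝ E] (f : ℝ → E) (c : ℝ) :
    ∫ u in Ioc 0 1, f (c + u) = ∫ t in Ioc c (c + 1), f t := by
  have := (measurePreserving_add_left volume c).setIntegral_preimage_emb
    (measurableEmbedding_addLeft c) f (Ioc c (c + 1))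
  rwa [preimage_const_add_Ioc, sub_self, add_sub_cancel_left] at this

theorem hasSum_setIntegral_Ioc_natCast_add [NormedSpace ℝ E] {f : ℝ → E}
    (hf : IntegrableOn f (Ioi 0)) :
    HasSum (fun k : ℕ ↦ ∫ u in Ioc 0 1, f (k + u)) (∫ t in Ioi 0, f t) := by
  simp_rw [setIntegral_Ioc_comp_add_left, ← iUnion_Ioc_natCast]
  exact hasSum_integral_iUnion (fun k ↦ measurableSet_Ioc) pairwise_disjoint_Ioc_natCast
    (by rwa [iUnion_Ioc_natCast])

theorem integrableOn_Ioc_tsum_natCast_add_and_setIntegral_eq [NormedSpace ℝ E] [CompleteSpace E]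
    {f : ℝ → E} (hf : IntegrableOn f (Ioi 0)) :
    IntegrableOn (fun u ↦ ∑' k : ℕ, f (k + u)) (Ioc 0 1) ∧
      ∫ u in Ioc 0 1, ∑' k : ℕ, f (k + u) = ∫ t in Ioi 0, f t := by
  have h_int (k : ℕ) : IntegrableOn (fun u ↦ f (k + u)) (Ioc 0 1) :=
    (integrableOn_Ioc_comp_add_left_iff f k).2
      (hf.mono_set fun t ht ↦ (Nat.cast_nonneg k).trans_lt ht.1)
  have h_norm := (hasSum_setIntegral_Ioc_natCast_add hf.norm).summable
  exact ⟨integrable_tsum_of_summable_integral_norm h_int h_norm,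
    (hasSum_integral_of_summable_integral_norm h_int h_norm).unique
      (hasSum_setIntegral_Ioc_natCast_add hf)⟩

end Periodization

theorem image_div_one_sub_Ioo : (fun x : ℝ ↦ x / (1 - x)) '' Ioo 0 1 = Ioi 0 := by
  ext t
  refine ⟨fun ⟨x, ⟨hx0, hx1⟩, hxt⟩ ↦ hxt ▸ div_pos hx0 (sub_pos.2 hx1), fun ht ↦ ?_⟩
  have ht : (0 : ℝ) < t := ht
  refine ⟨t / (1 + t), ⟨by positivity, (div_lt_one (by positivity)).2 (by linarith)⟩, ?_⟩
  field_simp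
  ring

theorem injOn_div_one_sub_Ioo : InjOn (fun x : ℝ ↦ x / (1 - x)) (Ioo 0 1) := by
  intro x ⟨_, hx⟩ y ⟨_, hy⟩ hxy
  rw [div_eq_div_iff (sub_pos.2 hx).ne' (sub_pos.2 hy).ne'] at hxy
  linarith

theorem hasDerivAt_div_one_sub {x : ℝ} (hx : x ≠ 1) :
    HasDerivAt (fun x : ℝ ↦ x / (1 - x)) ((1 - x) ^ 2)⁻¹ x := by
  refine ((hasDerivAt_id' x).div ((hasDerivAt_const x 1).sub (hasDerivAt_id' x))
    (sub_ne_zero.2 hx.symm)).congr_deriv ?_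
  simp only [Pi.sub_apply]
  field_simp
  ring

theorem abs_deriv_smul_cpow_div_one_sub (a b : ℂ) {x : ℝ} (hx : x ∈ Ioo 0 1) :
    |((1 - x) ^ 2)⁻¹| •
        (((x / (1 - x) : ℝ) : ℂ) ^ (a - 1) * ((1 + x / (1 - x) : ℝ) : ℂ) ^ (-(a + b))) =
      (x : ℂ) ^ (a - 1) * (1 - (x : ℂ)) ^ (b - 1) := by
  obtain ⟨hx0, hx1⟩ := hx
  have hy : 0 < 1 - x := sub_pos.2 hx1
  have h_inv_cpow (c : ℂ) : (((1 - x)⁻¹ : ℝ) : ℂ) ^ c = ((1 - x : ℝ) : ℂ) ^ (-c) := by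
    rw [ofReal_inv, inv_cpow _ _ (by rw [arg_ofReal_of_nonneg hy.le]; exact Real.pi_ne_zero.symm),
      cpow_neg]
  rw [abs_of_pos (by positivity), div_eq_mul_inv, show 1 + x * (1 - x)⁻¹ = (1 - x)⁻¹ by
    field_simp; ring, ofReal_mul, mul_cpow_ofReal_nonneg hx0.le (by positivity), h_inv_cpow,
    h_inv_cpow, neg_neg, real_smul]
  push_cast
  have hy' : 1 - (x : ℂ) ≠ 0 := by exact_mod_cast hy.ne'
  rw [mul_assoc _ (_ ^ _), ← cpow_add _ _ hy']
  conv_rhs => rw [show b - 1 = -(a - 1) + (a + b) + (-2 : ℤ) by push_cast; ring,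
    cpow_add _ _ hy', cpow_intCast, zpow_neg, zpow_two, ← sq]
  ring

theorem integrableOn_Ioi_and_setIntegral_eq_betaIntegral {a b : ℂ} (ha : 0 < a.re)
    (hb : 0 < b.re) :
    IntegrableOn (fun t : ℝ ↦ (t : ℂ) ^ (a - 1) * ((1 + t : ℝ) : ℂ) ^ (-(a + b))) (Ioi 0) ∧
      ∫ t in Ioi (0 : ℝ), (t : ℂ) ^ (a - 1) * ((1 + t : ℝ) : ℂ) ^ (-(a + b)) =
        betaIntegral a b := by
  have h_deriv (x : ℝ) (hx : x ∈ Ioo 0 1) := (hasDerivAt_div_one_sub hx.2.ne).hasDerivWithinAt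
    (s := Ioo 0 1)
  have h_eq := fun x (hx : x ∈ Ioo (0 : ℝ) 1) ↦ abs_deriv_smul_cpow_div_one_sub a b hx
  rw [← image_div_one_sub_Ioo,
    integrableOn_image_iff_integrableOn_abs_deriv_smul measurableSet_Ioo h_deriv
      injOn_div_one_sub_Ioo,
    integral_image_eq_integral_abs_deriv_smul measurableSet_Ioo h_deriv injOn_div_one_sub_Ioo,
    integrableOn_congr_fun h_eq measurableSet_Ioo, setIntegral_congr_fun measurableSet_Ioo h_eq,
    betaIntegral, intervalIntegral.integral_of_le zero_le_one, integral_Ioc_eq_integral_Ioo]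
  exact ⟨(betaIntegral_convergent ha hb).1.mono_set Ioo_subset_Ioc_self, rfl⟩

theorem integrableOn_Ioi_and_setIntegral_cpow_neg_mul_one_add_cpow_neg {s : ℂ}
    (h1 : 1 / 2 < s.re) (h2 : s.re < 1) :
    IntegrableOn (fun t : ℝ ↦ (t : ℂ) ^ (-s) * ((1 + t : ℝ) : ℂ) ^ (-s)) (Ioi 0) ∧
      ∫ t in Ioi (0 : ℝ), (t : ℂ) ^ (-s) * ((1 + t : ℝ) : ℂ) ^ (-s)
        = Gamma (1 - s) * Gamma (2 * s - 1) / Gamma s := by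
  have ha : 0 < (1 - s).re := by
    rw [sub_re, one_re]
    linarith
  have hb : 0 < (2 * s - 1).re := by
    simp only [sub_re, mul_re, re_ofNat, im_ofNat, zero_mul, sub_zero, one_re]
    linarith
  have h := integrableOn_Ioi_and_setIntegral_eq_betaIntegral ha hb
  rwa [betaIntegral_eq_Gamma_mul_div _ _ ha hb, show 1 - s - 1 = -s by ring,
    show 1 - s + (2 * s - 1) = s by ring] at h

theorem integrableOn_Hs_and_setIntegral_eq {s : ℂ} (h1 : 1 / 2 < s.re) (h2 : s.re < 1) :
    IntegrableOn (Hs s) (Ioc 0 1) ∧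
      ∫ u in Ioc 0 1, Hs s u = ∫ t in Ioi (0 : ℝ), (t : ℂ) ^ (-s) * ((1 + t : ℝ) : ℂ) ^ (-s) := by
  have h_Hs : Hs s = fun u ↦ ∑' k : ℕ,
      ((k + u : ℝ) : ℂ) ^ (-s) * ((1 + (k + u) : ℝ) : ℂ) ^ (-s) := by
    ext u
    simp only [Hs, add_assoc, add_comm (1 : ℝ)]
  rw [h_Hs]
  exact integrableOn_Ioc_tsum_natCast_add_and_setIntegral_eq
    (integrableOn_Ioi_and_setIntegral_cpow_neg_mul_one_add_cpow_neg h1 h2).1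

theorem stmt6 (s : ℂ) (h1 : 1 / 2 < s.re) (h2 : s.re < 1) :
    IntegrableOn (fun u : ℝ => Hs s u) (Set.Ioc 0 1) volume ∧
    (∫ u in Set.Ioc (0 : ℝ) 1, Hs s u)
      = (∫ t in Set.Ioi (0 : ℝ), (t : ℂ) ^ (-s) * (((1 + t : ℝ)) : ℂ) ^ (-s)) ∧
    (∫ u in Set.Ioc (0 : ℝ) 1, Hs s u)
      = Complex.Gamma (1 - s) * Complex.Gamma (2 * s - 1) / Complex.Gamma s ∧
    (∫ u in Set.Ioc (0 : ℝ) 1, Hs (2 / 3) u)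
      = Complex.Gamma (1 / 3) ^ 2 / Complex.Gamma (2 / 3) := by
  obtain ⟨h_int, h_Hs⟩ := integrableOn_Hs_and_setIntegral_eq h1 h2
  refine ⟨h_int, h_Hs,
    h_Hs.trans (integrableOn_Ioi_and_setIntegral_cpow_neg_mul_one_add_cpow_neg h1 h2).2, ?_⟩
  have h1' : 1 / 2 < (2 / 3 : ℂ).re := by norm_num
  have h2' : (2 / 3 : ℂ).re < 1 := by norm_num
  rw [(integrableOn_Hs_and_setIntegral_eq h1' h2').2,
    (integrableOn_Ioi_and_setIntegral_cpow_neg_mul_one_add_cpow_neg h1' h2').2]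
  norm_num [sq]
end

section
/- Fix real numbers α, β with 1/2 < α < β < 1. Then there exist constants C₁ > 0 and C₂ > 0 such that for every s = σ + iτ ∈ ℂ with α ≤ σ ≤ β and every u ∈ (0,1]: (i) |H_s(u)| ≤ C₁·u^{−σ}; (ii) the function u ↦ H_s(u) is differentiable at u and |d/du H_s(u)| ≤ C₂·(1+|τ|)·u^{−σ−1}. -/
open Complex

lemma hasDerivAt_ofReal_add_cpow (s : ℂ) {c x : ℝ} (h : 0 < c + x) :
    HasDerivAt (fun v : ℝ => ((c + v : ℝ) : ℂ) ^ s)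
      (s * ((c + x : ℝ) : ℂ) ^ s * ((c + x)⁻¹ : ℝ)) x := by
  have hne : ((c + x : ℝ) : ℂ) ≠ 0 := ofReal_ne_zero.mpr h.ne'
  have := ((hasDerivAt_id (x : ℂ)).const_add (c : ℂ)).cpow_const (c := s)
    (by simpa using ofReal_mem_slitPlane.mpr h)
  convert this.comp_ofReal using 1
  · ext v; push_cast; rfl
  · push_cast at hne ⊢
    rw [id, cpow_sub _ _ hne, cpow_one]; field_simp

lemma Real.add_rpow_neg_le {c x y r : ℝ} (hc : 0 ≤ c) (hy0 : 0 < y) (hy1 : y ≤ 1) (hyx : y ≤ x)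
    (hr : 0 ≤ r) : (c + x) ^ (-r) ≤ y ^ (-r) * (c + 1) ^ (-r) := by
  rw [← Real.mul_rpow hy0.le (by positivity)]
  exact Real.rpow_le_rpow_of_nonpos (by positivity) (by nlinarith) (by linarith)

lemma summable_nat_add_one_rpow_neg {p : ℝ} (hp : 1 < p) :
    Summable fun k : ℕ => ((k : ℝ) + 1) ^ (-p) := by
  simpa using (summable_nat_add_iff 1).mpr (Real.summable_nat_rpow.mpr (by linarith : -p < -1))

namespace Hs

noncomputable def term (s : ℂ) (u : ℝ) (k : ℕ) : ℂ :=
  (((k : ℝ) + u : ℝ) : ℂ) ^ (-s) * (((k : ℝ) + 1 + u : ℝ) : ℂ) ^ (-s)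

noncomputable def termDeriv (s : ℂ) (u : ℝ) (k : ℕ) : ℂ :=
  -s * term s u k * (((k : ℝ) + u)⁻¹ + ((k : ℝ) + 1 + u)⁻¹ : ℝ)

lemma hasDerivAt_term (s : ℂ) (k : ℕ) {u : ℝ} (hu : 0 < u) :
    HasDerivAt (fun v => term s v k) (termDeriv s u k) u := by
  have h₁ := hasDerivAt_ofReal_add_cpow (-s) (c := k) (x := u) (by positivity)
  have h₂ := hasDerivAt_ofReal_add_cpow (-s) (c := k + 1) (x := u) (by positivity)
  have hderiv : termDeriv s u k = -s * ((k + u : ℝ) : ℂ) ^ (-s) * ((k + u)⁻¹ : ℝ) *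
      ((k + 1 + u : ℝ) : ℂ) ^ (-s) +
      ((k + u : ℝ) : ℂ) ^ (-s) * (-s * ((k + 1 + u : ℝ) : ℂ) ^ (-s) * ((k + 1 + u)⁻¹ : ℝ)) := by
    rw [termDeriv, term]; push_cast; ring
  rw [hderiv]
  exact h₁.mul h₂

lemma norm_term_le {s : ℂ} {α : ℝ} (hα : 0 ≤ α) (hαs : α ≤ s.re) (k : ℕ) {x y : ℝ}
    (hy0 : 0 < y) (hy1 : y ≤ 1) (hyx : y ≤ x) :
    ‖term s x k‖ ≤ y ^ (-s.re) * ((k : ℝ) + 1) ^ (-(2 * α)) := by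
  have hk : (0 : ℝ) ≤ k := k.cast_nonneg
  have hσ : 0 ≤ s.re := hα.trans hαs
  have hx : 0 < x := hy0.trans_le hyx
  rw [term, norm_mul, norm_cpow_eq_rpow_re_of_pos (by positivity),
    norm_cpow_eq_rpow_re_of_pos (by positivity), neg_re]
  calc ((k : ℝ) + x) ^ (-s.re) * ((k : ℝ) + 1 + x) ^ (-s.re)
      ≤ (y ^ (-s.re) * ((k : ℝ) + 1) ^ (-s.re)) * ((k : ℝ) + 1) ^ (-s.re) := by
        refine mul_le_mul (Real.add_rpow_neg_le hk hy0 hy1 hyx hσ)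
          (Real.rpow_le_rpow_of_nonpos (by positivity) (by linarith) (by linarith))
          (by positivity) (by positivity)
    _ = y ^ (-s.re) * ((k : ℝ) + 1) ^ (-(2 * s.re)) := by
        rw [mul_assoc, ← Real.rpow_add (by positivity)]; ring_nf
    _ ≤ y ^ (-s.re) * ((k : ℝ) + 1) ^ (-(2 * α)) :=
        mul_le_mul_of_nonneg_left
          (Real.rpow_le_rpow_of_exponent_le (by linarith) (by linarith)) (by positivity)

lemma norm_termDeriv_le {s : ℂ} {α : ℝ} (hα : 0 ≤ α) (hαs : α ≤ s.re) (k : ℕ) {x y : ℝ}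
    (hy0 : 0 < y) (hy1 : y ≤ 1) (hyx : y ≤ x) :
    ‖termDeriv s x k‖ ≤ 2 * ‖s‖ * y ^ (-s.re - 1) * ((k : ℝ) + 1) ^ (-(2 * α)) := by
  have hk : (0 : ℝ) ≤ k := k.cast_nonneg
  have hx : 0 < x := hy0.trans_le hyx
  have hinv : ((k : ℝ) + x)⁻¹ + ((k : ℝ) + 1 + x)⁻¹ ≤ 2 * y⁻¹ := by
    have h₁ : ((k : ℝ) + x)⁻¹ ≤ y⁻¹ := inv_anti₀ hy0 (by linarith)
    have h₂ : ((k : ℝ) + 1 + x)⁻¹ ≤ y⁻¹ := inv_anti₀ hy0 (by linarith)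
    linarith
  rw [termDeriv, norm_mul, norm_mul, norm_neg, Complex.norm_of_nonneg (by positivity)]
  calc ‖s‖ * ‖term s x k‖ * (((k : ℝ) + x)⁻¹ + ((k : ℝ) + 1 + x)⁻¹)
      ≤ ‖s‖ * (y ^ (-s.re) * ((k : ℝ) + 1) ^ (-(2 * α))) * (2 * y⁻¹) := by
        gcongr
        exact norm_term_le hα hαs k hy0 hy1 hyx
    _ = 2 * ‖s‖ * (y ^ (-s.re) * y ^ (-1 : ℝ)) * ((k : ℝ) + 1) ^ (-(2 * α)) := by
        rw [Real.rpow_neg_one]; ring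
    _ = 2 * ‖s‖ * y ^ (-s.re - 1) * ((k : ℝ) + 1) ^ (-(2 * α)) := by
        rw [← Real.rpow_add hy0, sub_eq_add_neg]

section

variable {s : ℂ} {α u : ℝ}

lemma summable_term (hα : 1 / 2 < α) (hαs : α ≤ s.re) (hu0 : 0 < u) (hu1 : u ≤ 1) :
    Summable (term s u) :=
  .of_norm_bounded ((summable_nat_add_one_rpow_neg (by linarith)).mul_left (u ^ (-s.re)))
    fun k => norm_term_le (by linarith) hαs k hu0 hu1 le_rfl

lemma norm_Hs_le (hα : 1 / 2 < α) (hαs : α ≤ s.re) (hu0 : 0 < u) (hu1 : u ≤ 1) :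
    ‖Hs s u‖ ≤ (∑' k : ℕ, ((k : ℝ) + 1) ^ (-(2 * α))) * u ^ (-s.re) := by
  rw [mul_comm, ← tsum_mul_left]
  exact tsum_of_norm_bounded
    ((summable_nat_add_one_rpow_neg (by linarith)).mul_left _).hasSum
    fun k => norm_term_le (by linarith) hαs k hu0 hu1 le_rfl

lemma hasDerivAt_Hs (hα : 1 / 2 < α) (hαs : α ≤ s.re) (hu0 : 0 < u) (hu1 : u ≤ 1) :
    HasDerivAt (Hs s) (∑' k, termDeriv s u k) u := by
  have hu2 : 0 < u / 2 := by linarith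
  exact hasDerivAt_tsum_of_isPreconnected
    ((summable_nat_add_one_rpow_neg (p := 2 * α) (by linarith)).mul_left
      (2 * ‖s‖ * (u / 2) ^ (-s.re - 1)))
    isOpen_Ioi isPreconnected_Ioi (fun k v hv => hasDerivAt_term s k (hu2.trans hv))
    (fun k v hv => norm_termDeriv_le (by linarith) hαs k hu2 (by linarith) hv.le)
    (by simpa using (by linarith : u / 2 < u)) (summable_term hα hαs hu0 hu1)
    (by simpa using (by linarith : u / 2 < u))

lemma norm_tsum_termDeriv_le (hα : 1 / 2 < α) (hαs : α ≤ s.re) (hu0 : 0 < u) (hu1 : u ≤ 1) :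
    ‖∑' k, termDeriv s u k‖ ≤
      2 * ‖s‖ * (∑' k : ℕ, ((k : ℝ) + 1) ^ (-(2 * α))) * u ^ (-s.re - 1) := by
  rw [mul_right_comm, ← tsum_mul_left]
  exact tsum_of_norm_bounded
    ((summable_nat_add_one_rpow_neg (by linarith)).mul_left _).hasSum
    fun k => norm_termDeriv_le (by linarith) hαs k hu0 hu1 le_rfl

end

end Hs

theorem stmt7_general (α β : ℝ) (hα : 1 / 2 < α) (hβ : β < 1) :
    ∃ C₁ > (0 : ℝ), ∃ C₂ > (0 : ℝ),
      ∀ s : ℂ, α ≤ s.re → s.re ≤ β → ∀ u : ℝ, u ∈ Set.Ioc (0 : ℝ) 1 →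
        ‖Hs s u‖ ≤ C₁ * u ^ (-s.re) ∧
        ∃ D : ℂ, HasDerivAt (fun v : ℝ => Hs s v) D u ∧
          ‖D‖ ≤ C₂ * (1 + |s.im|) * u ^ (-s.re - 1) := by
  set Z := ∑' k : ℕ, ((k : ℝ) + 1) ^ (-(2 * α))
  have hZ : 0 < Z := (summable_nat_add_one_rpow_neg (by linarith)).tsum_pos
    (fun k => by positivity) 0 (by positivity)
  refine ⟨Z, hZ, 2 * Z, by positivity, fun s hαs hsβ u ⟨hu0, hu1⟩ =>
    ⟨Hs.norm_Hs_le hα hαs hu0 hu1, _, Hs.hasDerivAt_Hs hα hαs hu0 hu1,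
      (Hs.norm_tsum_termDeriv_le hα hαs hu0 hu1).trans ?_⟩⟩
  have hs : ‖s‖ ≤ 1 + |s.im| := by
    have := Complex.norm_le_abs_re_add_abs_im s
    rw [abs_of_pos (by linarith : 0 < s.re)] at this
    linarith
  calc 2 * ‖s‖ * Z * u ^ (-s.re - 1) = 2 * Z * ‖s‖ * u ^ (-s.re - 1) := by ring
    _ ≤ 2 * Z * (1 + |s.im|) * u ^ (-s.re - 1) := by gcongr

theorem stmt7 (α β : ℝ) (hα : 1 / 2 < α) (hαβ : α < β) (hβ : β < 1) :
    ∃ C₁ > (0 : ℝ), ∃ C₂ > (0 : ℝ),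
      ∀ s : ℂ, α ≤ s.re → s.re ≤ β → ∀ u : ℝ, u ∈ Set.Ioc (0 : ℝ) 1 →
        ‖Hs s u‖ ≤ C₁ * u ^ (-s.re) ∧
        ∃ D : ℂ, HasDerivAt (fun v : ℝ => Hs s v) D u ∧
          ‖D‖ ≤ C₂ * (1 + |s.im|) * u ^ (-s.re - 1) :=
  stmt7_general α β hα hβ
end

section
/- Let f : [0,1] → ℝ be three times continuously differentiable with |f''(x)| ≥ m for some m > 0 and all x ∈ [0,1]. For each Farey interval I = [c/d, a/b], set t_I(s) := |T_I(f)|^s − ( |f''(a/b)| / (2·b·d·(b+d)) )^s. Then the series ∑_I t_I(s), taken over all Farey intervals in [0,1], converges absolutely for every s with Re(s) > 1/2, and the function s ↦ ∑_I t_I(s) is holomorphic on the open half-plane {s ∈ ℂ : Re(s) > 1/2}. -/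
/-- A Farey interval `[c/d, a/b] ⊆ [0,1]`: nonnegative integers `a ≤ b`, `c ≤ d` with
`b, d ≥ 1`, `gcd(a,b) = gcd(c,d) = 1` and `ad - bc = 1`. -/
structure FareyPair : Type where
  a : ℕ
  b : ℕ
  c : ℕ
  d : ℕ
  hb : 1 ≤ b
  hd : 1 ≤ d
  hab : a ≤ b
  hcd : c ≤ d
  cop_ab : Nat.Coprime a b
  cop_cd : Nat.Coprime c d
  uni : a * d = b * c + 1

/-- The normalized Hata coefficient `T_I(f)` of a Farey interval `I = [c/d, a/b]`. -/
noncomputable def TI (f : ℝ → ℝ) (I : FareyPair) : ℝ :=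
  ((I.b : ℝ) + I.d) *
    (f (((I.a : ℝ) + I.c) / ((I.b : ℝ) + I.d))
      - ((I.b : ℝ) / ((I.b : ℝ) + I.d)) * f ((I.a : ℝ) / I.b)
      - ((I.d : ℝ) / ((I.b : ℝ) + I.d)) * f ((I.c : ℝ) / I.d))

/-- The second derivative of `f` on `[0,1]`, taken in the sense of `derivWithin`. -/
noncomputable def secondDerivOn (f : ℝ → ℝ) : ℝ → ℝ :=
  derivWithin (derivWithin f (Set.Icc 0 1)) (Set.Icc 0 1)
/-!
By Rolle's theorem applied twice (the error formula for linear interpolation),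
`T_I(f) = -f''(ξ) / (2bd(b+d))` for some `ξ` in `I`, an interval of length `1/(bd)`.
As `|f''|` lies between `m` and some `M` and is Lipschitz on `[0,1]`, both bases of `t_I(s)` lie
in `[m/N, M/N]` with `N = 2bd(b+d)` and differ by `O(1/(bdN))`; the mean value theorem for
`x ↦ x ^ s` then gives `|t_I(s)| ≪ |s| (bd)^(-1-Re s)`, locally uniformly in `s`. A Farey
interval is determined by its denominators `(b, d)`, so `∑_I (bd)^(-t) ≤ ζ(t)^2` for `t > 1`,
and the Weierstrass M-test gives both absolute convergence and holomorphy.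
-/

open Set

namespace FareyPair

theorem ext {I J : FareyPair} (ha : I.a = J.a) (hb : I.b = J.b) (hc : I.c = J.c)
    (hd : I.d = J.d) : I = J := by
  cases I; cases J; simp_all

theorem uni_int (I : FareyPair) : (I.a * I.d : ℤ) = I.b * I.c + 1 := by
  exact_mod_cast I.uni

theorem isCoprime_b_d (I : FareyPair) : IsCoprime (I.b : ℤ) I.d :=
  ⟨-I.c, I.a, by linear_combination I.uni_int⟩

theorem one_le_a (I : FareyPair) : 1 ≤ I.a :=
  Nat.one_le_iff_ne_zero.2 fun h => by simpa [h] using I.uni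

/-- `a` is the inverse of `d` modulo `b`, and `1 ≤ a ≤ b` pins it down. -/
theorem b_d_injective : Function.Injective fun I : FareyPair => (I.b, I.d) := by
  intro I J h
  obtain ⟨hb, hd⟩ : I.b = J.b ∧ I.d = J.d := Prod.ext_iff.1 h
  have hdiff : ((I.a : ℤ) - J.a) * I.d = I.b * ((I.c : ℤ) - J.c) := by
    have := J.uni_int
    rw [← hb, ← hd] at this
    linear_combination I.uni_int - this
  have ha : I.a = J.a := by
    have hdvd : (I.b : ℤ) ∣ (I.a : ℤ) - J.a :=
      I.isCoprime_b_d.dvd_of_dvd_mul_right ⟨_, hdiff⟩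
    have hlt : |(I.a : ℤ) - J.a| < I.b := by
      have := I.one_le_a; have := J.one_le_a; have := I.hab; have := J.hab
      rw [abs_lt]; constructor <;> omega
    have := Int.eq_zero_of_abs_lt_dvd hdvd hlt
    omega
  have hc : I.c = J.c := by
    have hb0 : (I.b : ℤ) ≠ 0 := by have := I.hb; omega
    rw [ha, sub_self, zero_mul] at hdiff
    have := mul_eq_zero.1 hdiff.symm
    omega
  exact ext ha hb hc hd

theorem summable_rpow_neg {t : ℝ} (ht : 1 < t) :
    Summable fun I : FareyPair => ((I.b : ℝ) * I.d) ^ (-t) := by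
  have hζ : Summable fun n : ℕ => (n : ℝ) ^ (-t) := Real.summable_nat_rpow.2 (by linarith)
  have hζ2 : Summable fun n : ℕ × ℕ => (n.1 : ℝ) ^ (-t) * (n.2 : ℝ) ^ (-t) :=
    hζ.mul_of_nonneg hζ (fun _ => by positivity) (fun _ => by positivity)
  refine (hζ2.comp_injective b_d_injective).congr fun I => ?_
  simp [Real.mul_rpow]

theorem a_div_b_mem_Icc (I : FareyPair) : (I.a : ℝ) / I.b ∈ Icc 0 1 :=
  ⟨by positivity, div_le_one_of_le₀ (by exact_mod_cast I.hab) (by positivity)⟩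

theorem one_le_b_mul_d (I : FareyPair) : (1 : ℝ) ≤ I.b * I.d :=
  one_le_mul_of_one_le_of_one_le (by exact_mod_cast I.hb) (by exact_mod_cast I.hd)

theorem a_div_b_sub_c_div_d (I : FareyPair) :
    (I.a : ℝ) / I.b - I.c / I.d = 1 / (I.b * I.d) := by
  have : (I.b : ℝ) ≠ 0 := by have := I.hb; positivity
  have : (I.d : ℝ) ≠ 0 := by have := I.hd; positivity
  have huni : (I.a : ℝ) * I.d = I.b * I.c + 1 := by exact_mod_cast I.uni
  field_simp
  linear_combination huni

end FareyPair

theorem exists_hasDerivAt_hasDerivAt_eq_zero {g g' g'' : ℝ → ℝ} {p r q : ℝ}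
    (hpr : p < r) (hrq : r < q) (hg : ContinuousOn g (Icc p q))
    (hg' : ∀ x ∈ Ioo p q, HasDerivAt g (g' x) x) (hg'' : ∀ x ∈ Ioo p q, HasDerivAt g' (g'' x) x)
    (hgpr : g p = g r) (hgrq : g r = g q) : ∃ ξ ∈ Ioo p q, g'' ξ = 0 := by
  obtain ⟨u, hu, hg'u⟩ := exists_hasDerivAt_eq_zero hpr
    (hg.mono (Icc_subset_Icc_right hrq.le)) hgpr
    (fun x hx => hg' x ⟨hx.1, hx.2.trans hrq⟩)
  obtain ⟨v, hv, hg'v⟩ := exists_hasDerivAt_eq_zero hrq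
    (hg.mono (Icc_subset_Icc_left hpr.le)) hgrq
    (fun x hx => hg' x ⟨hpr.trans hx.1, hx.2⟩)
  have huv : Icc u v ⊆ Ioo p q := Icc_subset_Ioo hu.1 hv.2
  obtain ⟨ξ, hξ, hg''ξ⟩ := exists_hasDerivAt_eq_zero (hu.2.trans hv.1)
    (fun x hx => (hg'' x (huv hx)).continuousAt.continuousWithinAt) (hg'u.trans hg'v.symm)
    (fun x hx => hg'' x (huv (Ioo_subset_Icc_self hx)))
  exact ⟨ξ, huv (Ioo_subset_Icc_self hξ), hg''ξ⟩

theorem exists_linear_interpolation_error_eq {f f' f'' : ℝ → ℝ} {p r q : ℝ}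
    (hpr : p < r) (hrq : r < q) (hf : ContinuousOn f (Icc p q))
    (hf' : ∀ x ∈ Ioo p q, HasDerivAt f (f' x) x)
    (hf'' : ∀ x ∈ Ioo p q, HasDerivAt f' (f'' x) x) :
    ∃ ξ ∈ Ioo p q, f r - (r - p) / (q - p) * f q - (q - r) / (q - p) * f p
      = -((r - p) * (q - r) / 2) * f'' ξ := by
  have hrp : r - p ≠ 0 := by linarith
  have hrq' : r - q ≠ 0 := by linarith
  have hqp : q - p ≠ 0 := by linarith
  set μ := (f q - f p) / (q - p)
  -- `K` is chosen so that the auxiliary function below also vanishes at `r`.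
  set K := (f r - f p - μ * (r - p)) / ((r - p) * (r - q))
  obtain ⟨ξ, hξ, hg''⟩ := exists_hasDerivAt_hasDerivAt_eq_zero (r := r)
    (g := fun t => f t - f p - μ * (t - p) - K * ((t - p) * (t - q)))
    (g' := fun t => f' t - μ - K * (2 * t - p - q)) (g'' := fun t => f'' t - 2 * K) hpr hrq
    (hf.sub continuousOn_const |>.sub (by fun_prop) |>.sub (by fun_prop))
    (fun x hx => by
      have := (((hf' x hx).sub_const (f p)).sub
        (((hasDerivAt_id' x).sub_const p).const_mul μ)).sub
        ((((hasDerivAt_id' x).sub_const p).mul ((hasDerivAt_id' x).sub_const q)).const_mul K)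
      exact this.congr_deriv (by ring))
    (fun x hx => by
      have := ((hf'' x hx).sub_const μ).sub
        (((((hasDerivAt_id' x).const_mul 2).sub_const p).sub_const q).const_mul K)
      exact this.congr_deriv (by ring))
    (by simp only [K]; field_simp; ring) (by simp only [K, μ]; field_simp; ring)
  refine ⟨ξ, hξ, ?_⟩
  rw [show f'' ξ = 2 * K by linarith]
  simp only [K, μ]
  field_simp
  ring

theorem hasDerivAt_derivWithin_Icc {g : ℝ → ℝ} (hg : DifferentiableOn ℝ g (Icc 0 1)) {x : ℝ}
    (hx : x ∈ Ioo (0 : ℝ) 1) : HasDerivAt g (derivWithin g (Icc 0 1) x) x :=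
  (hg x (Ioo_subset_Icc_self hx)).hasDerivWithinAt.hasDerivAt (Icc_mem_nhds hx.1 hx.2)

theorem contDiffOn_secondDerivOn {f : ℝ → ℝ} {n : WithTop ℕ∞}
    (hf : ContDiffOn ℝ (n + 2) f (Icc 0 1)) : ContDiffOn ℝ n (secondDerivOn f) (Icc 0 1) :=
  (hf.derivWithin (uniqueDiffOn_Icc one_pos) (by rw [add_assoc, one_add_one_eq_two])).derivWithin
    (uniqueDiffOn_Icc one_pos) le_rfl

/-- `T_I(f)` is `b + d` times the error at the mediant of the linear interpolation of `f`
between `c/d` and `a/b`. -/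
theorem exists_TI_eq {f : ℝ → ℝ} (hf : ContDiffOn ℝ 2 f (Icc 0 1)) (I : FareyPair) :
    ∃ ξ ∈ Ioo ((I.c : ℝ) / I.d) ((I.a : ℝ) / I.b),
      TI f I = -secondDerivOn f ξ / (2 * I.b * I.d * (I.b + I.d)) := by
  have hb : (1 : ℝ) ≤ I.b := by exact_mod_cast I.hb
  have hd : (1 : ℝ) ≤ I.d := by exact_mod_cast I.hd
  have huni : (I.a : ℝ) * I.d = I.b * I.c + 1 := by exact_mod_cast I.uni
  have hp : 0 ≤ (I.c : ℝ) / I.d := by positivity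
  have hq : (I.a : ℝ) / I.b ≤ 1 := I.a_div_b_mem_Icc.2
  have hpr : (I.c : ℝ) / I.d < (I.a + I.c) / (I.b + I.d) := by
    rw [div_lt_div_iff₀ (by linarith) (by linarith)]; linarith
  have hrq : ((I.a : ℝ) + I.c) / (I.b + I.d) < I.a / I.b := by
    rw [div_lt_div_iff₀ (by linarith) (by linarith)]; linarith
  have hsub : Ioo ((I.c : ℝ) / I.d) (I.a / I.b) ⊆ Ioo 0 1 := Ioo_subset_Ioo hp hq
  have hf' : ContDiffOn ℝ 1 (derivWithin f (Icc 0 1)) (Icc 0 1) :=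
    hf.derivWithin (uniqueDiffOn_Icc one_pos) (by norm_num)
  obtain ⟨ξ, hξ, heq⟩ := exists_linear_interpolation_error_eq hpr hrq
    (hf.continuousOn.mono (Icc_subset_Icc hp hq))
    (fun x hx => hasDerivAt_derivWithin_Icc (hf.differentiableOn two_ne_zero) (hsub hx))
    (fun x hx => hasDerivAt_derivWithin_Icc (hf'.differentiableOn one_ne_zero) (hsub hx))
  refine ⟨ξ, hξ, ?_⟩
  have hrp : ((I.a : ℝ) + I.c) / (I.b + I.d) - I.c / I.d = 1 / (I.d * (I.b + I.d)) := by
    field_simp; linear_combination huni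
  have hqr : (I.a : ℝ) / I.b - (I.a + I.c) / (I.b + I.d) = 1 / (I.b * (I.b + I.d)) := by
    field_simp; linear_combination huni
  rw [I.a_div_b_sub_c_div_d, hrp, hqr] at heq
  rw [secondDerivOn, TI]
  field_simp at heq ⊢
  linear_combination heq

theorem exists_abs_TI_eq {f : ℝ → ℝ} (hf : ContDiffOn ℝ 2 f (Icc 0 1)) (I : FareyPair) :
    ∃ ξ ∈ Icc (0 : ℝ) 1, |ξ - I.a / I.b| ≤ 1 / (I.b * I.d) ∧
      |TI f I| = |secondDerivOn f ξ| / (2 * I.b * I.d * (I.b + I.d)) := by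
  obtain ⟨ξ, hξ, hTI⟩ := exists_TI_eq hf I
  have hb : (1 : ℝ) ≤ I.b := by exact_mod_cast I.hb
  have hd : (1 : ℝ) ≤ I.d := by exact_mod_cast I.hd
  refine ⟨ξ, ⟨(by positivity : (0 : ℝ) ≤ I.c / I.d).trans hξ.1.le,
    hξ.2.le.trans I.a_div_b_mem_Icc.2⟩, ?_, ?_⟩
  · rw [abs_sub_comm, abs_of_pos (sub_pos.2 hξ.2), ← I.a_div_b_sub_c_div_d]
    linarith [hξ.1]
  · have hN : (0 : ℝ) < 2 * I.b * I.d * (I.b + I.d) := by positivity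
    rw [hTI, abs_div, abs_neg, abs_of_pos hN]

theorem exists_rpow_le_of_mem_Icc {m M e₁ e₂ : ℝ} (hm : 0 < m) :
    ∃ K, ∀ t ∈ Icc m M, ∀ e ∈ Icc e₁ e₂, t ^ e ≤ K := by
  obtain ⟨K, hK⟩ := (isCompact_Icc.prod isCompact_Icc).exists_bound_of_continuousOn
    (f := fun x : ℝ × ℝ => x.1 ^ x.2) fun x hx =>
      (Real.continuousAt_rpow x (Or.inl (hm.trans_le hx.1.1).ne')).continuousWithinAt
  exact ⟨K, fun t ht e he => (le_abs_self _).trans (hK (t, e) ⟨ht, he⟩)⟩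

theorem norm_ofReal_cpow_sub_ofReal_cpow_le {A B x y K : ℝ} (hA : 0 < A) (hx : x ∈ Icc A B)
    (hy : y ∈ Icc A B) {s : ℂ} (hK : ∀ t ∈ Icc A B, t ^ (s.re - 1) ≤ K) :
    ‖(x : ℂ) ^ s - (y : ℂ) ^ s‖ ≤ ‖s‖ * K * |x - y| := by
  have hderiv : ∀ t ∈ Icc A B,
      HasDerivWithinAt (fun t : ℝ => (t : ℂ) ^ s) (s * (t : ℂ) ^ (s - 1)) (Icc A B) t :=
    fun t ht => (((Complex.hasStrictDerivAt_cpow_const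
      (Complex.ofReal_mem_slitPlane.2 (hA.trans_le ht.1))).hasDerivAt).comp_ofReal).hasDerivWithinAt
  have hbound : ∀ t ∈ Icc A B, ‖s * (t : ℂ) ^ (s - 1)‖ ≤ ‖s‖ * K := fun t ht => by
    rw [norm_mul, Complex.norm_cpow_eq_rpow_re_of_pos (hA.trans_le ht.1), Complex.sub_re,
      Complex.one_re]
    exact mul_le_mul_of_nonneg_left (hK t ht) (norm_nonneg s)
  simpa [Real.norm_eq_abs] using
    (convex_Icc A B).norm_image_sub_le_of_norm_hasDerivWithin_le hderiv hbound hy hx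

theorem norm_ofReal_div_cpow_sub_ofReal_div_cpow {u v N : ℝ} (hu : 0 ≤ u) (hv : 0 ≤ v)
    (hN : 0 < N) (s : ℂ) :
    ‖((u / N : ℝ) : ℂ) ^ s - ((v / N : ℝ) : ℂ) ^ s‖
      = N ^ (-s.re) * ‖(u : ℂ) ^ s - (v : ℂ) ^ s‖ := by
  simp only [div_eq_mul_inv, Complex.ofReal_mul]
  rw [Complex.mul_cpow_ofReal_nonneg hu (inv_nonneg.2 hN.le),
    Complex.mul_cpow_ofReal_nonneg hv (inv_nonneg.2 hN.le), ← sub_mul, norm_mul, mul_comm,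
    Complex.norm_cpow_eq_rpow_re_of_pos (inv_pos.2 hN), Real.inv_rpow hN.le, Real.rpow_neg hN.le]

noncomputable def tI (f : ℝ → ℝ) (I : FareyPair) (s : ℂ) : ℂ :=
  ((|TI f I| : ℝ) : ℂ) ^ s
    - ((|secondDerivOn f ((I.a : ℝ) / I.b)|
        / (2 * (I.b : ℝ) * (I.d : ℝ) * ((I.b : ℝ) + I.d)) : ℝ) : ℂ) ^ s

theorem norm_tI_le {f : ℝ → ℝ} (hf : ContDiffOn ℝ 2 f (Icc 0 1)) {m M K : ℝ} {L : NNReal}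
    (hm : 0 < m) (hlb : ∀ x ∈ Icc (0 : ℝ) 1, m ≤ |secondDerivOn f x|)
    (hub : ∀ x ∈ Icc (0 : ℝ) 1, |secondDerivOn f x| ≤ M)
    (hL : LipschitzOnWith L (secondDerivOn f) (Icc 0 1)) {s : ℂ} (hs : 0 ≤ s.re)
    (hK : ∀ t ∈ Icc m M, t ^ (s.re - 1) ≤ K) (I : FareyPair) :
    ‖tI f I s‖ ≤ ‖s‖ * K * L * ((I.b : ℝ) * I.d) ^ (-(1 + s.re)) := by
  obtain ⟨ξ, hξ, hξq, hTI⟩ := exists_abs_TI_eq hf I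
  have hq := I.a_div_b_mem_Icc
  have hbd := I.one_le_b_mul_d
  have hb : (1 : ℝ) ≤ I.b := by exact_mod_cast I.hb
  have hd : (1 : ℝ) ≤ I.d := by exact_mod_cast I.hd
  set N : ℝ := 2 * I.b * I.d * (I.b + I.d) with hN
  have hN₀ : 0 < N := by rw [hN]; positivity
  have hbdN : N ^ (-s.re) ≤ ((I.b : ℝ) * I.d) ^ (-s.re) :=
    Real.rpow_le_rpow_of_nonpos (by linarith) (by nlinarith) (by linarith)
  have hK₀ : 0 ≤ K := (hK m ⟨le_rfl, (hlb _ hq).trans (hub _ hq)⟩).trans' (by positivity)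
  have hdiff : |(|secondDerivOn f ξ| - |secondDerivOn f (I.a / I.b)|)| ≤ L * (1 / (I.b * I.d)) :=
    calc _ ≤ |secondDerivOn f ξ - secondDerivOn f (I.a / I.b)| := abs_abs_sub_abs_le_abs_sub _ _
      _ ≤ L * |ξ - I.a / I.b| := hL.dist_le_mul ξ hξ _ hq
      _ ≤ L * (1 / (I.b * I.d)) := by gcongr
  calc ‖tI f I s‖
      = N ^ (-s.re) * ‖((|secondDerivOn f ξ| : ℝ) : ℂ) ^ s
          - ((|secondDerivOn f (I.a / I.b)| : ℝ) : ℂ) ^ s‖ := by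
        rw [tI, hTI, norm_ofReal_div_cpow_sub_ofReal_div_cpow (abs_nonneg _) (abs_nonneg _) hN₀]
    _ ≤ ((I.b : ℝ) * I.d) ^ (-s.re) * (‖s‖ * K * (L * (1 / (I.b * I.d)))) := by
        gcongr
        exact (norm_ofReal_cpow_sub_ofReal_cpow_le hm ⟨hlb _ hξ, hub _ hξ⟩
          ⟨hlb _ hq, hub _ hq⟩ hK).trans (by gcongr)
    _ = ‖s‖ * K * L * ((I.b : ℝ) * I.d) ^ (-(1 + s.re)) := by
        rw [neg_add, Real.rpow_add (by positivity), Real.rpow_neg_one]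
        ring

theorem exists_norm_tI_le {f : ℝ → ℝ} (hf : ContDiffOn ℝ 3 f (Icc 0 1)) {m : ℝ} (hm : 0 < m)
    (hlb : ∀ x ∈ Icc (0 : ℝ) 1, m ≤ |secondDerivOn f x|) {σ : ℝ} (hσ : 0 ≤ σ) (R : ℝ) :
    ∃ C, ∀ s : ℂ, σ ≤ s.re → ‖s‖ ≤ R → ∀ I : FareyPair,
      ‖tI f I s‖ ≤ C * ((I.b : ℝ) * I.d) ^ (-(1 + σ)) := by
  have hf'' : ContDiffOn ℝ 1 (secondDerivOn f) (Icc 0 1) := contDiffOn_secondDerivOn hf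
  obtain ⟨M, hM⟩ := isCompact_Icc.exists_bound_of_continuousOn hf''.continuousOn
  obtain ⟨L, hL⟩ := hf''.exists_lipschitzOnWith one_ne_zero (convex_Icc 0 1) isCompact_Icc
  obtain ⟨K, hK⟩ := exists_rpow_le_of_mem_Icc (M := M) (e₁ := σ - 1) (e₂ := R - 1) hm
  refine ⟨R * K * L, fun s hσs hsR I => ?_⟩
  have hσR : σ ≤ R := hσs.trans ((Complex.re_le_norm s).trans hsR)
  have hmM : m ≤ M := (hlb 0 ⟨le_rfl, zero_le_one⟩).trans (hM 0 ⟨le_rfl, zero_le_one⟩)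
  have hK0 : 0 ≤ K := (hK m ⟨le_rfl, hmM⟩ _ ⟨le_rfl, by linarith⟩).trans' (by positivity)
  refine (norm_tI_le (hf.of_le (by norm_num)) hm hlb hM hL (hσ.trans hσs)
    (fun t ht => hK t ht _ ⟨by linarith, by linarith [Complex.re_le_norm s]⟩) I).trans ?_
  have hR : 0 ≤ R := (norm_nonneg s).trans hsR
  gcongr
  exact I.one_le_b_mul_d

theorem differentiableAt_tI (f : ℝ → ℝ) (I : FareyPair) {s : ℂ} (hs : s ≠ 0) :
    DifferentiableAt ℂ (tI f I) s :=
  (differentiableAt_id.const_cpow (Or.inr hs)).sub (differentiableAt_id.const_cpow (Or.inr hs))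

theorem stmt12 (f : ℝ → ℝ) (hf : ContDiffOn ℝ 3 f (Set.Icc 0 1))
    (m : ℝ) (hm : 0 < m) (hlb : ∀ x ∈ Set.Icc (0 : ℝ) 1, m ≤ |secondDerivOn f x|) :
    (∀ s : ℂ, 1 / 2 < s.re →
      Summable (fun I : FareyPair =>
        ‖(((|TI f I| : ℝ) : ℂ) ^ s
          - ((|secondDerivOn f ((I.a : ℝ) / I.b)|
              / (2 * (I.b : ℝ) * (I.d : ℝ) * ((I.b : ℝ) + I.d)) : ℝ) : ℂ) ^ s)‖)) ∧
    DifferentiableOn ℂ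
      (fun s : ℂ => ∑' I : FareyPair,
        (((|TI f I| : ℝ) : ℂ) ^ s
          - ((|secondDerivOn f ((I.a : ℝ) / I.b)|
              / (2 * (I.b : ℝ) * (I.d : ℝ) * ((I.b : ℝ) + I.d)) : ℝ) : ℂ) ^ s))
      {s : ℂ | 1 / 2 < s.re} := by
  refine ⟨fun s hs => ?_, fun s₀ hs₀ => ?_⟩
  · obtain ⟨C, hC⟩ := exists_norm_tI_le hf hm hlb (by linarith : 0 ≤ s.re) ‖s‖
    exact ((FareyPair.summable_rpow_neg (by linarith)).mul_left C).of_nonneg_of_le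
      (fun _ => norm_nonneg _) (hC s le_rfl le_rfl)
  · obtain ⟨σ, hσ, hσs₀⟩ := exists_between (show 1 / 2 < s₀.re from hs₀)
    obtain ⟨C, hC⟩ := exists_norm_tI_le hf hm hlb (by linarith : 0 ≤ σ) (‖s₀‖ + 1)
    set U := {s : ℂ | σ < s.re} ∩ Metric.ball 0 (‖s₀‖ + 1)
    have hU : IsOpen U :=
      (isOpen_lt continuous_const Complex.continuous_re).inter Metric.isOpen_ball
    have hdiff : DifferentiableOn ℂ (fun s => ∑' I, tI f I s) U :=
      Complex.differentiableOn_tsum_of_summable_norm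
        ((FareyPair.summable_rpow_neg (by linarith)).mul_left C)
        (fun I s hs => (differentiableAt_tI f I
          (Complex.ne_zero_of_re_pos (by linarith [show σ < s.re from hs.1]))).differentiableWithinAt)
        hU
        (fun I s hs => hC s hs.1.le (mem_ball_zero_iff.1 hs.2).le I)
    exact (hdiff.differentiableAt (hU.mem_nhds ⟨hσs₀, by simp⟩)).differentiableWithinAt
end

section
/- Let a, b, c, d be nonnegative integers with ad − bc = 1 (so that a+b ≥ 1 and c+d ≥ 1). Then, as an identity of real (equivalently rational) numbers, (ab)/(a+b) + (cd)/(c+d) − ((a+c)(b+d))/(a+b+c+d) = − 1 / ((a+b)(c+d)(a+b+c+d)). In particular | (ab)/(a+b) + (cd)/(c+d) − ((a+c)(b+d))/(a+b+c+d) | = 1 / ((a+b)(c+d)(a+b+c+d)). -/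
theorem stmt16 (a b c d : ℕ) (h : a * d = b * c + 1) :
    ((a : ℝ) * b / ((a : ℝ) + b) + (c : ℝ) * d / ((c : ℝ) + d)
        - ((a : ℝ) + c) * ((b : ℝ) + d) / ((a : ℝ) + b + c + d)
      = -1 / (((a : ℝ) + b) * ((c : ℝ) + d) * ((a : ℝ) + b + c + d))) ∧
    |(a : ℝ) * b / ((a : ℝ) + b) + (c : ℝ) * d / ((c : ℝ) + d)
        - ((a : ℝ) + c) * ((b : ℝ) + d) / ((a : ℝ) + b + c + d)|
      = 1 / (((a : ℝ) + b) * ((c : ℝ) + d) * ((a : ℝ) + b + c + d)) := by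
  have ha : 1 ≤ a := by nlinarith
  have hd : 1 ≤ d := by nlinarith
  have hab : (0:ℝ) < (a:ℝ) + b := by
    have : (1:ℝ) ≤ (a:ℝ) := by exact_mod_cast ha
    have hb : (0:ℝ) ≤ (b:ℝ) := Nat.cast_nonneg b
    linarith
  have hcd : (0:ℝ) < (c:ℝ) + d := by
    have : (1:ℝ) ≤ (d:ℝ) := by exact_mod_cast hd
    have hc : (0:ℝ) ≤ (c:ℝ) := Nat.cast_nonneg c
    linarith
  have habcd : (0:ℝ) < (a:ℝ) + b + c + d := by linarith
  have hR : (a:ℝ) * d = (b:ℝ) * c + 1 := by exact_mod_cast h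
  have key : ((a : ℝ) * b / ((a : ℝ) + b) + (c : ℝ) * d / ((c : ℝ) + d)
        - ((a : ℝ) + c) * ((b : ℝ) + d) / ((a : ℝ) + b + c + d)
      = -1 / (((a : ℝ) + b) * ((c : ℝ) + d) * ((a : ℝ) + b + c + d))) := by
    field_simp
    nlinarith [hR, sq_nonneg ((a:ℝ)+b), sq_nonneg ((c:ℝ)+d)]
  refine ⟨key, ?_⟩
  rw [key]
  rw [abs_div, abs_neg, abs_one, abs_of_pos (by positivity)]
end

section
/- Let s ∈ ℂ with Re(s) > 2/3. Then the three series ∑_{a,b,c,d ≥ 0, ad−bc=1} ((a+b)(c+d)(a+b+c+d))^{−s}, ∑_{p,q ≥ 1, gcd(p,q)=1} (pq(p+q))^{−s}, and ∑_{p,q ≥ 1} (pq(p+q))^{−s} all converge absolutely; the first two are equal, and ∑_{p,q ≥ 1} (pq(p+q))^{−s} = ζ(3s) · ∑_{p,q ≥ 1, gcd(p,q)=1} (pq(p+q))^{−s}, where ζ is the Riemann zeta function. -/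
/-!
A matrix `(a b; c d)` with nonnegative entries and determinant one is determined by its row sums
`p = a + b`, `q = c + d`: these are coprime, and `b * q + 1 = d * p` with `b < p` forces `b` to be
the residue of `-q⁻¹` modulo `p`. Conversely every coprime pair arises this way, so the first two
series are rearrangements of each other. Writing an arbitrary positive pair as `n • (p, q)` with
`(p, q)` coprime pulls out the factor `n ^ (-3s)`, whence `ζ(3s)`. Absolute convergence follows
from `p q (p + q) ≥ (p q) ^ (3/2)`.
-/

/-- `(a, b, c, d)` stands for the matrix `(a b; c d)`. -/
abbrev NonnegSL2 := {q : ℕ × ℕ × ℕ × ℕ // q.1 * q.2.2.2 = q.2.1 * q.2.2.1 + 1}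
abbrev PosPair := {p : ℕ × ℕ // 1 ≤ p.1 ∧ 1 ≤ p.2}
abbrev CoprimePosPair := {p : ℕ × ℕ // 1 ≤ p.1 ∧ 1 ≤ p.2 ∧ Nat.Coprime p.1 p.2}

noncomputable def tornheimTerm (s : ℂ) (p q : ℕ) : ℂ := ((p * q * (p + q) : ℕ) : ℂ) ^ (-s)

namespace Nat

theorem dvd_mul_add_one_iff {p q b : ℕ} (h : q.Coprime p) :
    p ∣ b * q + 1 ↔ (b : ZMod p) = -(q : ZMod p)⁻¹ := by
  have hq : (q : ZMod p) * (q : ZMod p)⁻¹ = 1 := ZMod.coe_mul_inv_eq_one q h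
  rw [← ZMod.natCast_eq_zero_iff]
  push_cast
  constructor <;> intro hb
  · linear_combination (q : ZMod p)⁻¹ * hb - b * hq
  · linear_combination (q : ZMod p) * hb - hq

theorem existsUnique_lt_dvd_mul_add_one {p q : ℕ} (hp : 1 ≤ p) (h : q.Coprime p) :
    ∃! b, b < p ∧ p ∣ b * q + 1 := by
  have : NeZero p := ⟨by omega⟩
  refine ⟨(-(q : ZMod p)⁻¹).val,
    ⟨ZMod.val_lt _, (dvd_mul_add_one_iff h).2 (ZMod.natCast_zmod_val _)⟩, ?_⟩
  rintro b ⟨hbp, hb⟩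
  rw [← (dvd_mul_add_one_iff h).1 hb, ZMod.val_natCast_of_lt hbp]

end Nat

section Determinant

variable {a b c d : ℕ}

theorem mul_add_add_one_of_mul_eq (h : a * d = b * c + 1) : b * (c + d) + 1 = d * (a + b) := by
  rw [mul_add, add_right_comm, ← h]
  ring

theorem pos_and_pos_of_mul_eq (h : a * d = b * c + 1) : 0 < a ∧ 0 < d :=
  CanonicallyOrderedAdd.mul_pos.mp (h ▸ Nat.succ_pos _)

theorem coprime_add_add_of_mul_eq (h : a * d = b * c + 1) : Nat.Coprime (a + b) (c + d) :=
  Nat.isCoprime_iff_coprime.mp ⟨d, -b, by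
    have := mul_add_add_one_of_mul_eq h
    zify at this
    push_cast
    linear_combination -this⟩

end Determinant

namespace NonnegSL2

def rowSums (x : NonnegSL2) : CoprimePosPair :=
  have := pos_and_pos_of_mul_eq x.2
  ⟨(x.1.1 + x.1.2.1, x.1.2.2.1 + x.1.2.2.2), by omega, by omega, coprime_add_add_of_mul_eq x.2⟩

theorem rowSums_injective : Function.Injective rowSums := by
  rintro ⟨⟨a, b, c, d⟩, h⟩ ⟨⟨a', b', c', d'⟩, h'⟩ hrow
  dsimp only at h h'
  simp only [rowSums, Subtype.mk.injEq, Prod.mk.injEq] at hrow ⊢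
  obtain ⟨hp, hq⟩ := hrow
  have hd := mul_add_add_one_of_mul_eq h
  have hd' := mul_add_add_one_of_mul_eq h'
  rw [← hp, ← hq] at hd'
  have ha := pos_and_pos_of_mul_eq h
  have ha' := pos_and_pos_of_mul_eq h'
  have hb : b = b' :=
    (Nat.existsUnique_lt_dvd_mul_add_one (by omega) (coprime_add_add_of_mul_eq h).symm).unique
      ⟨by omega, hd ▸ dvd_mul_left _ _⟩ ⟨by omega, hd' ▸ dvd_mul_left _ _⟩
  subst hb
  have hdd : d = d' := Nat.eq_of_mul_eq_mul_right (by omega) (hd.symm.trans hd')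
  omega

theorem rowSums_surjective : Function.Surjective rowSums := by
  rintro ⟨⟨p, q⟩, hp, hq, hpq⟩
  obtain ⟨b, ⟨hbp, d, hd⟩, -⟩ := Nat.existsUnique_lt_dvd_mul_add_one hp hpq.symm
  have hdq : d ≤ q := by nlinarith
  refine ⟨⟨(p - b, b, q - d, d), ?_⟩, ?_⟩
  · zify [hbp.le, hdq] at hd ⊢
    linear_combination -hd
  · simp only [rowSums, Subtype.mk.injEq, Prod.mk.injEq]
    omega

theorem mul_rowSums (x : NonnegSL2) :
    (x.1.1 + x.1.2.1) * (x.1.2.2.1 + x.1.2.2.2) * (x.1.1 + x.1.2.1 + x.1.2.2.1 + x.1.2.2.2)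
      = (rowSums x).1.1 * (rowSums x).1.2 * ((rowSums x).1.1 + (rowSums x).1.2) := by
  simp only [rowSums, add_assoc]

noncomputable def rowSumsEquiv : NonnegSL2 ≃ CoprimePosPair :=
  Equiv.ofBijective rowSums ⟨rowSums_injective, rowSums_surjective⟩

end NonnegSL2

namespace PosPair

def gcdEquiv : ℕ+ × CoprimePosPair ≃ PosPair where
  toFun z := ⟨(z.1 * z.2.1.1, z.1 * z.2.1.2), Nat.mul_pos z.1.pos z.2.2.1,
    Nat.mul_pos z.1.pos z.2.2.2.1⟩
  invFun P :=
    have hg : 0 < Nat.gcd P.1.1 P.1.2 := Nat.gcd_pos_of_pos_left _ P.2.1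
    (⟨_, hg⟩, ⟨(P.1.1 / Nat.gcd P.1.1 P.1.2, P.1.2 / Nat.gcd P.1.1 P.1.2),
      Nat.div_pos (Nat.gcd_le_left _ P.2.1) hg, Nat.div_pos (Nat.gcd_le_right _ P.2.2) hg,
      Nat.coprime_div_gcd_div_gcd hg⟩)
  left_inv := by
    rintro ⟨n, ⟨⟨p, q⟩, hp, hq, hpq⟩⟩
    have hg : Nat.gcd (n * p) (n * q) = n := by rw [Nat.gcd_mul_left, hpq, mul_one]
    exact Prod.ext (PNat.eq (by simp [hg])) (by ext <;> simp [hg])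
  right_inv := by
    rintro ⟨⟨p, q⟩, hp, hq⟩
    ext <;> simp [Nat.mul_div_cancel' (Nat.gcd_dvd_left p q),
      Nat.mul_div_cancel' (Nat.gcd_dvd_right p q)]

end PosPair

theorem tornheimTerm_mul_mul (s : ℂ) (n p q : ℕ) :
    tornheimTerm s (n * p) (n * q) = (n : ℂ) ^ (-(3 * s)) * tornheimTerm s p q := by
  rw [tornheimTerm, tornheimTerm,
    show n * p * (n * q) * (n * p + n * q) = n ^ 3 * (p * q * (p + q)) by ring,
    Nat.cast_mul, Complex.natCast_mul_natCast_cpow, Nat.cast_pow,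
      ← Complex.natCast_cpow_natCast_mul]
  push_cast
  ring_nf

theorem tsum_pnat_cpow_neg {s : ℂ} (hs : 1 < s.re) :
    ∑' n : ℕ+, ((n : ℕ) : ℂ) ^ (-s) = riemannZeta s := by
  rw [zeta_eq_tsum_one_div_nat_add_one_cpow hs,
    tsum_pnat_eq_tsum_succ (f := fun n : ℕ => (n : ℂ) ^ (-s))]
  simp [Complex.cpow_neg]

theorem summable_norm_pnat_cpow_neg {s : ℂ} (hs : 1 < s.re) :
    Summable fun n : ℕ+ => ‖((n : ℕ) : ℂ) ^ (-s)‖ := by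
  simp_rw [Complex.norm_natCast_cpow_of_pos (PNat.pos _)]
  exact summable_pnat_iff_summable_nat.mpr (Real.summable_nat_rpow.mpr (by simpa using hs))

theorem rpow_neg_mul_mul_add_le {P Q σ : ℝ} (hP : 0 < P) (hQ : 0 < Q) (hσ : 0 ≤ σ) :
    (P * Q * (P + Q)) ^ (-σ) ≤ P ^ (-(3 * σ / 2)) * Q ^ (-(3 * σ / 2)) := by
  have hPQ : 0 < P * Q := mul_pos hP hQ
  have hsqrt : Real.sqrt (P * Q) ≤ P + Q := Real.sqrt_le_iff.mpr ⟨by positivity, by nlinarith⟩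
  have hpow : (P * Q) ^ ((3 : ℝ) / 2) ≤ P * Q * (P + Q) := by
    rw [show (3 : ℝ) / 2 = 1 + 1 / 2 by norm_num, Real.rpow_add hPQ, Real.rpow_one,
      ← Real.sqrt_eq_rpow]
    gcongr
  calc (P * Q * (P + Q)) ^ (-σ) ≤ ((P * Q) ^ ((3 : ℝ) / 2)) ^ (-σ) :=
        Real.rpow_le_rpow_of_nonpos (by positivity) hpow (by linarith)
    _ = P ^ (-(3 * σ / 2)) * Q ^ (-(3 * σ / 2)) := by
        rw [← Real.rpow_mul hPQ.le, Real.mul_rpow hP.le hQ.le]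
        ring_nf

theorem norm_tornheimTerm_le {s : ℂ} (hs : 0 < s.re) (p q : ℕ) :
    ‖tornheimTerm s p q‖ ≤ (p : ℝ) ^ (-(3 * s.re / 2)) * (q : ℝ) ^ (-(3 * s.re / 2)) := by
  rcases Nat.eq_zero_or_pos (p * q * (p + q)) with h0 | hpos
  · have hs0 : -s ≠ 0 := fun h => by simp [neg_eq_zero.mp h] at hs
    rw [tornheimTerm, h0, Nat.cast_zero, Complex.zero_cpow hs0, norm_zero]
    positivity
  · have hp := CanonicallyOrderedAdd.mul_pos.mp (CanonicallyOrderedAdd.mul_pos.mp hpos).1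
    rw [tornheimTerm, Complex.norm_natCast_cpow_of_pos hpos, Complex.neg_re]
    push_cast
    exact rpow_neg_mul_mul_add_le (by exact_mod_cast hp.1) (by exact_mod_cast hp.2) hs.le

theorem summable_norm_tornheimTerm {s : ℂ} (hs : 2 / 3 < s.re) :
    Summable fun z : ℕ × ℕ => ‖tornheimTerm s z.1 z.2‖ := by
  have hpow : Summable fun n : ℕ => (n : ℝ) ^ (-(3 * s.re / 2)) :=
    Real.summable_nat_rpow.mpr (by linarith)
  refine .of_nonneg_of_le (fun _ => norm_nonneg _)
    (fun z => norm_tornheimTerm_le (by linarith) z.1 z.2)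
    (hpow.mul_of_nonneg hpow (fun _ => by positivity) (fun _ => by positivity))

theorem tsum_tornheimTerm_eq_riemannZeta_mul {s : ℂ} (hs : 2 / 3 < s.re) :
    ∑' P : PosPair, tornheimTerm s P.1.1 P.1.2
      = riemannZeta (3 * s) * ∑' p : CoprimePosPair, tornheimTerm s p.1.1 p.1.2 := by
  have h3s : 1 < (3 * s).re := by
    simp only [Complex.mul_re, Complex.re_ofNat, Complex.im_ofNat, zero_mul, sub_zero]
    linarith
  rw [← tsum_pnat_cpow_neg h3s, tsum_mul_tsum_of_summable_norm (summable_norm_pnat_cpow_neg h3s)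
    ((summable_norm_tornheimTerm hs).subtype _), ← PosPair.gcdEquiv.tsum_eq]
  exact tsum_congr fun z => tornheimTerm_mul_mul s z.1 z.2.1.1 z.2.1.2

theorem stmt18 (s : ℂ) (hs : 2 / 3 < s.re) :
    Summable (fun x : {q : ℕ × ℕ × ℕ × ℕ // q.1 * q.2.2.2 = q.2.1 * q.2.2.1 + 1} =>
      ‖((((x.1.1 + x.1.2.1) * (x.1.2.2.1 + x.1.2.2.2)
          * (x.1.1 + x.1.2.1 + x.1.2.2.1 + x.1.2.2.2) : ℕ) : ℂ) ^ (-s))‖) ∧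
    Summable (fun p : {p : ℕ × ℕ // 1 ≤ p.1 ∧ 1 ≤ p.2 ∧ Nat.Coprime p.1 p.2} =>
      ‖(((p.1.1 * p.1.2 * (p.1.1 + p.1.2) : ℕ) : ℂ) ^ (-s))‖) ∧
    Summable (fun p : {p : ℕ × ℕ // 1 ≤ p.1 ∧ 1 ≤ p.2} =>
      ‖(((p.1.1 * p.1.2 * (p.1.1 + p.1.2) : ℕ) : ℂ) ^ (-s))‖) ∧
    (∑' x : {q : ℕ × ℕ × ℕ × ℕ // q.1 * q.2.2.2 = q.2.1 * q.2.2.1 + 1},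
        (((x.1.1 + x.1.2.1) * (x.1.2.2.1 + x.1.2.2.2)
          * (x.1.1 + x.1.2.1 + x.1.2.2.1 + x.1.2.2.2) : ℕ) : ℂ) ^ (-s))
      = (∑' p : {p : ℕ × ℕ // 1 ≤ p.1 ∧ 1 ≤ p.2 ∧ Nat.Coprime p.1 p.2},
          ((p.1.1 * p.1.2 * (p.1.1 + p.1.2) : ℕ) : ℂ) ^ (-s)) ∧
    (∑' p : {p : ℕ × ℕ // 1 ≤ p.1 ∧ 1 ≤ p.2},
        ((p.1.1 * p.1.2 * (p.1.1 + p.1.2) : ℕ) : ℂ) ^ (-s))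
      = riemannZeta (3 * s)
        * ∑' p : {p : ℕ × ℕ // 1 ≤ p.1 ∧ 1 ≤ p.2 ∧ Nat.Coprime p.1 p.2},
            ((p.1.1 * p.1.2 * (p.1.1 + p.1.2) : ℕ) : ℂ) ^ (-s) := by
  have hcop : Summable fun p : CoprimePosPair => ‖tornheimTerm s p.1.1 p.1.2‖ :=
    (summable_norm_tornheimTerm hs).subtype _
  simp only [NonnegSL2.mul_rowSums]
  exact ⟨NonnegSL2.rowSumsEquiv.summable_iff.mpr hcop, hcop,
    (summable_norm_tornheimTerm hs).subtype _,
    NonnegSL2.rowSumsEquiv.tsum_eq (fun p : CoprimePosPair => tornheimTerm s p.1.1 p.1.2),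
    tsum_tornheimTerm_eq_riemannZeta_mul hs⟩
end
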